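/- arXiv:2303.16842 — 3 statements merged into one kernel-verified Lean document; each statement's English description precedes it below -/
import Mathlib

section
/- Under the Riemann-variable Euler hypotheses, assume additionally that w, z, k are twice continuously differentiable, define the differentiated Riemann variables q^w := ∂_y w − (1/(2γ)) σ ∂_y k and q^z := ∂_y z + (1/(2γ)) σ ∂_y k, and let η : ℝ × [0,T] → ℝ be twice continuously differentiable with η(x,0) = x and ∂_t η(x,t) = λ₃(η(x,t), t) for all (x,t). Then for all (x,t) ∈ ℝ × [0,T], ∂_t [∂_x η(x,t) · q^w(η(x,t), t)] = (α/(4γ)) · ∂_x η(x,t) · (σ ∂_y k)(η(x,t), t) · (q^w + q^z)(η(x,t), t). -/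
noncomputable section

open Set Real

/-- The Riemann-variable form of the 1D compressible Euler equations on
`ℝ × [0,T]` for a fixed parameter `α > 0`, with `γ := 2α + 1`.  The functions
`w, z, k` (dominant and subdominant Riemann variables, and entropy) are
continuously differentiable, with partial derivatives recorded by the fields
`wt = ∂ₜw, wy = ∂_y w`, etc.; the rescaled sound speed `σ := (w - z)/2` is
everywhere positive, and with `u := (w + z)/2` and wave speeds
`λ₁ = u - ασ`, `λ₂ = u`, `λ₃ = u + ασ` the system
`∂ₜw + λ₃∂_yw = (α/(2γ))σ²∂_yk`, `∂ₜz + λ₁∂_yz = (α/(2γ))σ²∂_yk`,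
`∂ₜk + λ₂∂_yk = 0` holds on `ℝ × [0,T]`. -/
structure EulerRV (α T : ℝ) where
  w : ℝ → ℝ → ℝ
  z : ℝ → ℝ → ℝ
  k : ℝ → ℝ → ℝ
  wt : ℝ → ℝ → ℝ
  wy : ℝ → ℝ → ℝ
  zt : ℝ → ℝ → ℝ
  zy : ℝ → ℝ → ℝ
  kt : ℝ → ℝ → ℝ
  ky : ℝ → ℝ → ℝ
  hwt : ∀ (y : ℝ), ∀ t ∈ Icc (0:ℝ) T,
    HasDerivWithinAt (fun s => w y s) (wt y t) (Icc (0:ℝ) T) t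
  hwy : ∀ (y : ℝ), ∀ t ∈ Icc (0:ℝ) T, HasDerivAt (fun x => w x t) (wy y t) y
  hzt : ∀ (y : ℝ), ∀ t ∈ Icc (0:ℝ) T,
    HasDerivWithinAt (fun s => z y s) (zt y t) (Icc (0:ℝ) T) t
  hzy : ∀ (y : ℝ), ∀ t ∈ Icc (0:ℝ) T, HasDerivAt (fun x => z x t) (zy y t) y
  hkt : ∀ (y : ℝ), ∀ t ∈ Icc (0:ℝ) T,
    HasDerivWithinAt (fun s => k y s) (kt y t) (Icc (0:ℝ) T) t
  hky : ∀ (y : ℝ), ∀ t ∈ Icc (0:ℝ) T, HasDerivAt (fun x => k x t) (ky y t) y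
  cont_w : ContinuousOn (fun p : ℝ × ℝ => w p.1 p.2) (univ ×ˢ Icc (0:ℝ) T)
  cont_z : ContinuousOn (fun p : ℝ × ℝ => z p.1 p.2) (univ ×ˢ Icc (0:ℝ) T)
  cont_k : ContinuousOn (fun p : ℝ × ℝ => k p.1 p.2) (univ ×ˢ Icc (0:ℝ) T)
  cont_wt : ContinuousOn (fun p : ℝ × ℝ => wt p.1 p.2) (univ ×ˢ Icc (0:ℝ) T)
  cont_wy : ContinuousOn (fun p : ℝ × ℝ => wy p.1 p.2) (univ ×ˢ Icc (0:ℝ) T)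
  cont_zt : ContinuousOn (fun p : ℝ × ℝ => zt p.1 p.2) (univ ×ˢ Icc (0:ℝ) T)
  cont_zy : ContinuousOn (fun p : ℝ × ℝ => zy p.1 p.2) (univ ×ˢ Icc (0:ℝ) T)
  cont_kt : ContinuousOn (fun p : ℝ × ℝ => kt p.1 p.2) (univ ×ˢ Icc (0:ℝ) T)
  cont_ky : ContinuousOn (fun p : ℝ × ℝ => ky p.1 p.2) (univ ×ˢ Icc (0:ℝ) T)
  sigma_pos : ∀ (y : ℝ), ∀ t ∈ Icc (0:ℝ) T, 0 < (w y t - z y t) / 2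
  pde_w : ∀ (y : ℝ), ∀ t ∈ Icc (0:ℝ) T,
    wt y t + ((w y t + z y t) / 2 + α * ((w y t - z y t) / 2)) * wy y t
      = α / (2 * (2 * α + 1)) * ((w y t - z y t) / 2) ^ 2 * ky y t
  pde_z : ∀ (y : ℝ), ∀ t ∈ Icc (0:ℝ) T,
    zt y t + ((w y t + z y t) / 2 - α * ((w y t - z y t) / 2)) * zy y t
      = α / (2 * (2 * α + 1)) * ((w y t - z y t) / 2) ^ 2 * ky y t
  pde_k : ∀ (y : ℝ), ∀ t ∈ Icc (0:ℝ) T,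
    kt y t + ((w y t + z y t) / 2) * ky y t = 0

namespace EulerRV

variable {α T : ℝ}

/-- The (rescaled) sound speed `σ = (w - z)/2`. -/
def sg (e : EulerRV α T) (y t : ℝ) : ℝ := (e.w y t - e.z y t) / 2

/-- The fluid velocity `u = (w + z)/2`. -/
def vel (e : EulerRV α T) (y t : ℝ) : ℝ := (e.w y t + e.z y t) / 2

/-- The slow acoustic wave speed `λ₁ = u - ασ`. -/
def lam1 (e : EulerRV α T) (y t : ℝ) : ℝ := e.vel y t - α * e.sg y t

/-- The material wave speed `λ₂ = u`. -/
def lam2 (e : EulerRV α T) (y t : ℝ) : ℝ := e.vel y t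

/-- The fast acoustic wave speed `λ₃ = u + ασ`. -/
def lam3 (e : EulerRV α T) (y t : ℝ) : ℝ := e.vel y t + α * e.sg y t

end EulerRV

/-- The differentiated dominant Riemann variable `q^w = ∂_y w - (1/(2γ)) σ ∂_y k`. -/
def EulerRV.qw {α T : ℝ} (e : EulerRV α T) (y t : ℝ) : ℝ :=
  e.wy y t - 1 / (2 * (2 * α + 1)) * (e.sg y t * e.ky y t)

/-- The differentiated subdominant Riemann variable `q^z = ∂_y z + (1/(2γ)) σ ∂_y k`. -/
def EulerRV.qz {α T : ℝ} (e : EulerRV α T) (y t : ℝ) : ℝ :=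
  e.zy y t + 1 / (2 * (2 * α + 1)) * (e.sg y t * e.ky y t)


section DuhamelAux

private noncomputable def pD (T : ℝ) (f : ℝ × ℝ → ℝ) : ℝ × ℝ → (ℝ × ℝ →L[ℝ] ℝ) :=
  fderivWithin ℝ f (Set.univ ×ˢ Set.Icc (0:ℝ) T)

private noncomputable def pD2 (T : ℝ) (f : ℝ × ℝ → ℝ) :
    ℝ × ℝ → (ℝ × ℝ →L[ℝ] ℝ × ℝ →L[ℝ] ℝ) :=
  fderivWithin ℝ (pD T f) (Set.univ ×ˢ Set.Icc (0:ℝ) T)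

private lemma clm_eval2 {F : Type*} [NormedAddCommGroup F] [NormedSpace ℝ F]
    (L : ℝ × ℝ →L[ℝ] F) (a b : ℝ) : L (a, b) = a • L (1, 0) + b • L (0, 1) := by
  have h : ((a, b) : ℝ × ℝ) = a • ((1:ℝ), (0:ℝ)) + b • ((0:ℝ), (1:ℝ)) := by
    simp [Prod.ext_iff]
  rw [h, map_add, map_smul, map_smul]

private lemma clm_eval2R (L : ℝ × ℝ →L[ℝ] ℝ) (a b : ℝ) :
    L (a, b) = a * L (1, 0) + b * L (0, 1) := by
  rw [clm_eval2]; simp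

private lemma clm_eval2RR (B : ℝ × ℝ →L[ℝ] ℝ × ℝ →L[ℝ] ℝ) (a b : ℝ) (v : ℝ × ℝ) :
    B (a, b) v = a * B (1, 0) v + b * B (0, 1) v := by
  rw [clm_eval2 B]; simp

private lemma curve_comp {S : Set (ℝ×ℝ)} {f : ℝ×ℝ → ℝ} (hf : DifferentiableOn ℝ f S)
    {c : ℝ → ℝ×ℝ} {c' : ℝ×ℝ} {I : Set ℝ} {t : ℝ}
    (hc : HasDerivWithinAt c c' I t) (hmaps : Set.MapsTo c I S) (hct : c t ∈ S) :
    HasDerivWithinAt (fun s => f (c s)) (fderivWithin ℝ f S (c t) c') I t :=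
  ((hf _ hct).hasFDerivWithinAt).comp_hasDerivWithinAt t hc hmaps

private lemma curve_fderiv {S : Set (ℝ×ℝ)} (hUD : UniqueDiffOn ℝ S) {f : ℝ×ℝ → ℝ}
    (hf : ContDiffOn ℝ 2 f S)
    {c : ℝ → ℝ×ℝ} {c' : ℝ×ℝ} {I : Set ℝ} {t : ℝ}
    (hc : HasDerivWithinAt c c' I t) (hmaps : Set.MapsTo c I S) (hct : c t ∈ S) (v : ℝ×ℝ) :
    HasDerivWithinAt (fun s => fderivWithin ℝ f S (c s) v)
      (fderivWithin ℝ (fderivWithin ℝ f S) S (c t) c' v) I t := by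
  have h1 : ContDiffOn ℝ 1 (fderivWithin ℝ f S) S := hf.fderivWithin hUD (by norm_num)
  have h2 := (h1.differentiableOn one_ne_zero _ hct).hasFDerivWithinAt
  have h3 := (ContinuousLinearMap.apply ℝ ℝ v).hasFDerivAt.comp_hasFDerivWithinAt (c t) h2
  exact h3.comp_hasDerivWithinAt t hc hmaps

private lemma horiz_deriv {T : ℝ} {f : ℝ×ℝ → ℝ}
    (hf : DifferentiableOn ℝ f (univ ×ˢ Icc (0:ℝ) T)) {y t : ℝ} (ht : t ∈ Icc (0:ℝ) T) :
    HasDerivAt (fun x => f (x, t))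
      (fderivWithin ℝ f (univ ×ˢ Icc (0:ℝ) T) (y, t) (1, 0)) y := by
  have hc : HasDerivWithinAt (fun x : ℝ => (x, t)) ((1:ℝ), (0:ℝ)) univ y :=
    ((hasDerivAt_id y).prodMk (hasDerivAt_const y t)).hasDerivWithinAt
  have := curve_comp hf hc (fun x _ => ⟨trivial, ht⟩) ⟨trivial, ht⟩
  exact hasDerivWithinAt_univ.mp this

private lemma vert_deriv {T : ℝ} {f : ℝ×ℝ → ℝ}
    (hf : DifferentiableOn ℝ f (univ ×ˢ Icc (0:ℝ) T)) {y t : ℝ} (ht : t ∈ Icc (0:ℝ) T) :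
    HasDerivWithinAt (fun s => f (y, s))
      (fderivWithin ℝ f (univ ×ˢ Icc (0:ℝ) T) (y, t) (0, 1)) (Icc (0:ℝ) T) t := by
  have hc : HasDerivWithinAt (fun s : ℝ => (y, s)) ((0:ℝ), (1:ℝ)) (Icc (0:ℝ) T) t :=
    ((hasDerivAt_const t y).hasDerivWithinAt).prodMk (hasDerivWithinAt_id t _)
  exact curve_comp hf hc (fun s hs => ⟨trivial, hs⟩) ⟨trivial, ht⟩

private lemma horiz_deriv2 {T : ℝ} (hT : 0 < T) {f : ℝ×ℝ → ℝ}
    (hf : ContDiffOn ℝ 2 f (univ ×ˢ Icc (0:ℝ) T)) {y t : ℝ} (ht : t ∈ Icc (0:ℝ) T)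
    (v : ℝ×ℝ) :
    HasDerivAt (fun x => fderivWithin ℝ f (univ ×ˢ Icc (0:ℝ) T) (x, t) v)
      (fderivWithin ℝ (fderivWithin ℝ f (univ ×ˢ Icc (0:ℝ) T)) (univ ×ˢ Icc (0:ℝ) T)
        (y, t) (1, 0) v) y := by
  have hUD : UniqueDiffOn ℝ (univ ×ˢ Icc (0:ℝ) T) :=
    (uniqueDiffOn_univ : UniqueDiffOn ℝ (univ : Set ℝ)).prod (uniqueDiffOn_Icc hT)
  have hc : HasDerivWithinAt (fun x : ℝ => (x, t)) ((1:ℝ), (0:ℝ)) univ y :=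
    ((hasDerivAt_id y).prodMk (hasDerivAt_const y t)).hasDerivWithinAt
  have := curve_fderiv hUD hf hc (fun x _ => ⟨trivial, ht⟩) ⟨trivial, ht⟩ v
  exact hasDerivWithinAt_univ.mp this

private lemma vert_deriv2 {T : ℝ} (hT : 0 < T) {f : ℝ×ℝ → ℝ}
    (hf : ContDiffOn ℝ 2 f (univ ×ˢ Icc (0:ℝ) T)) {y t : ℝ} (ht : t ∈ Icc (0:ℝ) T)
    (v : ℝ×ℝ) :
    HasDerivWithinAt (fun s => fderivWithin ℝ f (univ ×ˢ Icc (0:ℝ) T) (y, s) v)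
      (fderivWithin ℝ (fderivWithin ℝ f (univ ×ˢ Icc (0:ℝ) T)) (univ ×ˢ Icc (0:ℝ) T)
        (y, t) (0, 1) v) (Icc (0:ℝ) T) t := by
  have hUD : UniqueDiffOn ℝ (univ ×ˢ Icc (0:ℝ) T) :=
    (uniqueDiffOn_univ : UniqueDiffOn ℝ (univ : Set ℝ)).prod (uniqueDiffOn_Icc hT)
  have hc : HasDerivWithinAt (fun s : ℝ => (y, s)) ((0:ℝ), (1:ℝ)) (Icc (0:ℝ) T) t :=
    ((hasDerivAt_const t y).hasDerivWithinAt).prodMk (hasDerivWithinAt_id t _)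
  exact curve_fderiv hUD hf hc (fun s hs => ⟨trivial, hs⟩) ⟨trivial, ht⟩ v

private lemma symm2 {T : ℝ} (hT : 0 < T) {f : ℝ×ℝ → ℝ}
    (hf : ContDiffOn ℝ 2 f (univ ×ˢ Icc (0:ℝ) T)) {p : ℝ×ℝ}
    (hp : p ∈ univ ×ˢ Icc (0:ℝ) T) (v w : ℝ×ℝ) :
    fderivWithin ℝ (fderivWithin ℝ f (univ ×ˢ Icc (0:ℝ) T)) (univ ×ˢ Icc (0:ℝ) T) p v w
      = fderivWithin ℝ (fderivWithin ℝ f (univ ×ˢ Icc (0:ℝ) T)) (univ ×ˢ Icc (0:ℝ) T) p w v := by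
  have hUD : UniqueDiffOn ℝ (univ ×ˢ Icc (0:ℝ) T) :=
    (uniqueDiffOn_univ : UniqueDiffOn ℝ (univ : Set ℝ)).prod (uniqueDiffOn_Icc hT)
  have hx : p ∈ closure (interior (univ ×ˢ Icc (0:ℝ) T)) := by
    rw [interior_prod_eq, interior_univ, interior_Icc, closure_prod_eq, closure_univ,
      closure_Ioo hT.ne]
    exact hp
  exact ((hf.contDiffWithinAt hp).isSymmSndFDerivWithinAt (by simp) hUD hx hp).eq v w

private lemma horiz_derivP {T : ℝ} {f : ℝ×ℝ → ℝ}
    (hf : DifferentiableOn ℝ f (univ ×ˢ Icc (0:ℝ) T)) {y t : ℝ} (ht : t ∈ Icc (0:ℝ) T) :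
    HasDerivAt (fun x => f (x, t)) (pD T f (y, t) (1, 0)) y := horiz_deriv hf ht

private lemma vert_derivP {T : ℝ} {f : ℝ×ℝ → ℝ}
    (hf : DifferentiableOn ℝ f (univ ×ˢ Icc (0:ℝ) T)) {y t : ℝ} (ht : t ∈ Icc (0:ℝ) T) :
    HasDerivWithinAt (fun s => f (y, s)) (pD T f (y, t) (0, 1)) (Icc (0:ℝ) T) t :=
  vert_deriv hf ht

private lemma horiz_deriv2P {T : ℝ} (hT : 0 < T) {f : ℝ×ℝ → ℝ}
    (hf : ContDiffOn ℝ 2 f (univ ×ˢ Icc (0:ℝ) T)) {y t : ℝ} (ht : t ∈ Icc (0:ℝ) T)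
    (v : ℝ×ℝ) :
    HasDerivAt (fun x => pD T f (x, t) v) (pD2 T f (y, t) (1, 0) v) y :=
  horiz_deriv2 hT hf ht v

private lemma vert_deriv2P {T : ℝ} (hT : 0 < T) {f : ℝ×ℝ → ℝ}
    (hf : ContDiffOn ℝ 2 f (univ ×ˢ Icc (0:ℝ) T)) {y t : ℝ} (ht : t ∈ Icc (0:ℝ) T)
    (v : ℝ×ℝ) :
    HasDerivWithinAt (fun s => pD T f (y, s) v) (pD2 T f (y, t) (0, 1) v) (Icc (0:ℝ) T) t :=
  vert_deriv2 hT hf ht v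

private lemma symm2P {T : ℝ} (hT : 0 < T) {f : ℝ×ℝ → ℝ}
    (hf : ContDiffOn ℝ 2 f (univ ×ˢ Icc (0:ℝ) T)) {p : ℝ×ℝ}
    (hp : p ∈ univ ×ˢ Icc (0:ℝ) T) (v w : ℝ×ℝ) :
    pD2 T f p v w = pD2 T f p w v := symm2 hT hf hp v w

private lemma curve_compP {T : ℝ} {f : ℝ×ℝ → ℝ}
    (hf : DifferentiableOn ℝ f (univ ×ˢ Icc (0:ℝ) T))
    {c : ℝ → ℝ×ℝ} {c' : ℝ×ℝ} {I : Set ℝ} {t : ℝ}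
    (hc : HasDerivWithinAt c c' I t) (hmaps : Set.MapsTo c I (univ ×ˢ Icc (0:ℝ) T))
    (hct : c t ∈ univ ×ˢ Icc (0:ℝ) T) :
    HasDerivWithinAt (fun s => f (c s)) (pD T f (c t) c') I t :=
  curve_comp hf hc hmaps hct

private lemma curve_fderivP {T : ℝ} (hT : 0 < T) {f : ℝ×ℝ → ℝ}
    (hf : ContDiffOn ℝ 2 f (univ ×ˢ Icc (0:ℝ) T))
    {c : ℝ → ℝ×ℝ} {c' : ℝ×ℝ} {I : Set ℝ} {t : ℝ}
    (hc : HasDerivWithinAt c c' I t) (hmaps : Set.MapsTo c I (univ ×ˢ Icc (0:ℝ) T))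
    (hct : c t ∈ univ ×ˢ Icc (0:ℝ) T) (v : ℝ×ℝ) :
    HasDerivWithinAt (fun s => pD T f (c s) v) (pD2 T f (c t) c' v) I t :=
  curve_fderiv ((uniqueDiffOn_univ : UniqueDiffOn ℝ (univ : Set ℝ)).prod (uniqueDiffOn_Icc hT))
    hf hc hmaps hct v

end DuhamelAux

/-- If `w, z, k` are twice continuously differentiable and
`η` is the (twice continuously differentiable) flow of `λ₃`, then
`∂ₜ[∂ₓη · q^w∘η] = (α/(4γ)) · ∂ₓη · (σ∂_yk)∘η · (q^w + q^z)∘η`. -/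
theorem euler_qw_duhamel_identity
    {α T : ℝ} (hα : 0 < α) (hT : 0 < T) (e : EulerRV α T)
    (hw2 : ContDiffOn ℝ 2 (fun p : ℝ × ℝ => e.w p.1 p.2) (Set.univ ×ˢ Set.Icc (0:ℝ) T))
    (hz2 : ContDiffOn ℝ 2 (fun p : ℝ × ℝ => e.z p.1 p.2) (Set.univ ×ˢ Set.Icc (0:ℝ) T))
    (hk2 : ContDiffOn ℝ 2 (fun p : ℝ × ℝ => e.k p.1 p.2) (Set.univ ×ˢ Set.Icc (0:ℝ) T))
    (η : ℝ → ℝ → ℝ)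
    (hreg : ContDiffOn ℝ 2 (fun p : ℝ × ℝ => η p.1 p.2) (Set.univ ×ˢ Set.Icc (0:ℝ) T))
    (hη0 : ∀ x : ℝ, η x 0 = x)
    (hη : ∀ (x : ℝ), ∀ t ∈ Set.Icc (0:ℝ) T,
      HasDerivWithinAt (fun s => η x s) (e.lam3 (η x t) t) (Set.Icc (0:ℝ) T) t) :
    ∀ (x : ℝ), ∀ t ∈ Set.Icc (0:ℝ) T,
      HasDerivWithinAt
        (fun s => deriv (fun x' => η x' s) x * e.qw (η x s) s)
        (α / (4 * (2 * α + 1))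
          * (deriv (fun x' => η x' t) x * (e.sg (η x t) t * e.ky (η x t) t)
              * (e.qw (η x t) t + e.qz (η x t) t)))
        (Set.Icc (0:ℝ) T) t := by
  intro x t ht
  have hUDIcc : UniqueDiffOn ℝ (Icc (0:ℝ) T) := uniqueDiffOn_Icc hT
  have hWd : DifferentiableOn ℝ (fun p : ℝ × ℝ => e.w p.1 p.2) (univ ×ˢ Icc (0:ℝ) T) :=
    hw2.differentiableOn two_ne_zero
  have hZd : DifferentiableOn ℝ (fun p : ℝ × ℝ => e.z p.1 p.2) (univ ×ˢ Icc (0:ℝ) T) :=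
    hz2.differentiableOn two_ne_zero
  have hKd : DifferentiableOn ℝ (fun p : ℝ × ℝ => e.k p.1 p.2) (univ ×ˢ Icc (0:ℝ) T) :=
    hk2.differentiableOn two_ne_zero
  have hHd : DifferentiableOn ℝ (fun p : ℝ × ℝ => η p.1 p.2) (univ ×ˢ Icc (0:ℝ) T) :=
    hreg.differentiableOn two_ne_zero
  have hpS : ((η x t, t) : ℝ × ℝ) ∈ (univ : Set ℝ) ×ˢ Icc (0:ℝ) T := ⟨trivial, ht⟩
  have hxtS : ((x, t) : ℝ × ℝ) ∈ (univ : Set ℝ) ×ˢ Icc (0:ℝ) T := ⟨trivial, ht⟩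
  -- identification of partial derivatives with the recorded fields
  have idWy : ∀ (y : ℝ), ∀ t' ∈ Icc (0:ℝ) T, pD T (fun p : ℝ × ℝ => e.w p.1 p.2) (y, t') (1, 0) = e.wy y t' := by
    intro y t' ht'
    have h1 : HasDerivAt (fun x' => e.w x' t') (pD T (fun p : ℝ × ℝ => e.w p.1 p.2) (y, t') (1, 0)) y :=
      horiz_derivP hWd ht'
    exact h1.unique (e.hwy y t' ht')
  have idZy : ∀ (y : ℝ), ∀ t' ∈ Icc (0:ℝ) T, pD T (fun p : ℝ × ℝ => e.z p.1 p.2) (y, t') (1, 0) = e.zy y t' := by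
    intro y t' ht'
    have h1 : HasDerivAt (fun x' => e.z x' t') (pD T (fun p : ℝ × ℝ => e.z p.1 p.2) (y, t') (1, 0)) y :=
      horiz_derivP hZd ht'
    exact h1.unique (e.hzy y t' ht')
  have idKy : ∀ (y : ℝ), ∀ t' ∈ Icc (0:ℝ) T, pD T (fun p : ℝ × ℝ => e.k p.1 p.2) (y, t') (1, 0) = e.ky y t' := by
    intro y t' ht'
    have h1 : HasDerivAt (fun x' => e.k x' t') (pD T (fun p : ℝ × ℝ => e.k p.1 p.2) (y, t') (1, 0)) y :=
      horiz_derivP hKd ht'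
    exact h1.unique (e.hky y t' ht')
  have idWt : ∀ (y : ℝ), ∀ t' ∈ Icc (0:ℝ) T, pD T (fun p : ℝ × ℝ => e.w p.1 p.2) (y, t') (0, 1) = e.wt y t' := by
    intro y t' ht'
    have h1 : HasDerivWithinAt (fun s => e.w y s) (pD T (fun p : ℝ × ℝ => e.w p.1 p.2) (y, t') (0, 1)) (Icc (0:ℝ) T) t' :=
      vert_derivP hWd ht'
    rw [← h1.derivWithin (hUDIcc t' ht'), ← (e.hwt y t' ht').derivWithin (hUDIcc t' ht')]
  have idZt : ∀ (y : ℝ), ∀ t' ∈ Icc (0:ℝ) T, pD T (fun p : ℝ × ℝ => e.z p.1 p.2) (y, t') (0, 1) = e.zt y t' := by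
    intro y t' ht'
    have h1 : HasDerivWithinAt (fun s => e.z y s) (pD T (fun p : ℝ × ℝ => e.z p.1 p.2) (y, t') (0, 1)) (Icc (0:ℝ) T) t' :=
      vert_derivP hZd ht'
    rw [← h1.derivWithin (hUDIcc t' ht'), ← (e.hzt y t' ht').derivWithin (hUDIcc t' ht')]
  have idKt : ∀ (y : ℝ), ∀ t' ∈ Icc (0:ℝ) T, pD T (fun p : ℝ × ℝ => e.k p.1 p.2) (y, t') (0, 1) = e.kt y t' := by
    intro y t' ht'
    have h1 : HasDerivWithinAt (fun s => e.k y s) (pD T (fun p : ℝ × ℝ => e.k p.1 p.2) (y, t') (0, 1)) (Icc (0:ℝ) T) t' :=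
      vert_derivP hKd ht'
    rw [← h1.derivWithin (hUDIcc t' ht'), ← (e.hkt y t' ht').derivWithin (hUDIcc t' ht')]
  have idHt : ∀ (x' : ℝ), ∀ t' ∈ Icc (0:ℝ) T,
      pD T (fun p : ℝ × ℝ => η p.1 p.2) (x', t') (0, 1) = e.lam3 (η x' t') t' := by
    intro x' t' ht'
    have h1 : HasDerivWithinAt (fun s => η x' s) (pD T (fun p : ℝ × ℝ => η p.1 p.2) (x', t') (0, 1)) (Icc (0:ℝ) T) t' :=
      vert_derivP hHd ht'
    rw [← h1.derivWithin (hUDIcc t' ht'), ← (hη x' t' ht').derivWithin (hUDIcc t' ht')]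
  -- the characteristic curve
  have hmaps : MapsTo (fun s => ((η x s, s) : ℝ × ℝ)) (Icc (0:ℝ) T)
      ((univ : Set ℝ) ×ˢ Icc (0:ℝ) T) := fun s hs => ⟨trivial, hs⟩
  have hcurve : HasDerivWithinAt (fun s => ((η x s, s) : ℝ × ℝ))
      ((e.lam3 (η x t) t, 1) : ℝ × ℝ) (Icc (0:ℝ) T) t :=
    (hη x t ht).prodMk (hasDerivWithinAt_id t _)
  -- first-order quantities along the curve
  have hw_c : HasDerivWithinAt (fun s => e.w (η x s) s) (e.lam3 (η x t) t * e.wy (η x t) t + e.wt (η x t) t) (Icc (0:ℝ) T) t := by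
    have h : HasDerivWithinAt (fun s => e.w (η x s) s)
        (pD T (fun p : ℝ × ℝ => e.w p.1 p.2) (η x t, t) ((e.lam3 (η x t) t, 1) : ℝ × ℝ)) (Icc (0:ℝ) T) t :=
      curve_compP hWd hcurve hmaps hpS
    rwa [clm_eval2R, idWy (η x t) t ht, idWt (η x t) t ht, one_mul] at h
  have hz_c : HasDerivWithinAt (fun s => e.z (η x s) s) (e.lam3 (η x t) t * e.zy (η x t) t + e.zt (η x t) t) (Icc (0:ℝ) T) t := by
    have h : HasDerivWithinAt (fun s => e.z (η x s) s)
        (pD T (fun p : ℝ × ℝ => e.z p.1 p.2) (η x t, t) ((e.lam3 (η x t) t, 1) : ℝ × ℝ)) (Icc (0:ℝ) T) t :=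
      curve_compP hZd hcurve hmaps hpS
    rwa [clm_eval2R, idZy (η x t) t ht, idZt (η x t) t ht, one_mul] at h
  have hsg_c : HasDerivWithinAt (fun s => e.sg (η x s) s) ((e.lam3 (η x t) t * e.wy (η x t) t + e.wt (η x t) t - (e.lam3 (η x t) t * e.zy (η x t) t + e.zt (η x t) t)) / 2) (Icc (0:ℝ) T) t :=
    (hw_c.sub hz_c).div_const 2
  have hwy_c : HasDerivWithinAt (fun s => e.wy (η x s) s) (e.lam3 (η x t) t * pD2 T (fun p : ℝ × ℝ => e.w p.1 p.2) (η x t, t) (1, 0) (1, 0) + pD2 T (fun p : ℝ × ℝ => e.w p.1 p.2) (η x t, t) (1, 0) (0, 1)) (Icc (0:ℝ) T) t := by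
    have h : HasDerivWithinAt (fun s => pD T (fun p : ℝ × ℝ => e.w p.1 p.2) (η x s, s) (1, 0))
        (pD2 T (fun p : ℝ × ℝ => e.w p.1 p.2) (η x t, t) ((e.lam3 (η x t) t, 1) : ℝ × ℝ) (1, 0)) (Icc (0:ℝ) T) t :=
      curve_fderivP hT hw2 hcurve hmaps hpS (1, 0)
    rw [clm_eval2RR, one_mul, symm2P hT hw2 hpS (0, 1) (1, 0)] at h
    exact h.congr (fun s hs => (idWy (η x s) s hs).symm) ((idWy (η x t) t ht).symm)
  have hky_c : HasDerivWithinAt (fun s => e.ky (η x s) s) (e.lam3 (η x t) t * pD2 T (fun p : ℝ × ℝ => e.k p.1 p.2) (η x t, t) (1, 0) (1, 0) + pD2 T (fun p : ℝ × ℝ => e.k p.1 p.2) (η x t, t) (1, 0) (0, 1)) (Icc (0:ℝ) T) t := by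
    have h : HasDerivWithinAt (fun s => pD T (fun p : ℝ × ℝ => e.k p.1 p.2) (η x s, s) (1, 0))
        (pD2 T (fun p : ℝ × ℝ => e.k p.1 p.2) (η x t, t) ((e.lam3 (η x t) t, 1) : ℝ × ℝ) (1, 0)) (Icc (0:ℝ) T) t :=
      curve_fderivP hT hk2 hcurve hmaps hpS (1, 0)
    rw [clm_eval2RR, one_mul, symm2P hT hk2 hpS (0, 1) (1, 0)] at h
    exact h.congr (fun s hs => (idKy (η x s) s hs).symm) ((idKy (η x t) t ht).symm)
  have hQ : HasDerivWithinAt (fun s => e.qw (η x s) s) (e.lam3 (η x t) t * pD2 T (fun p : ℝ × ℝ => e.w p.1 p.2) (η x t, t) (1, 0) (1, 0) + pD2 T (fun p : ℝ × ℝ => e.w p.1 p.2) (η x t, t) (1, 0) (0, 1) - 1 / (2 * (2 * α + 1)) * (((e.lam3 (η x t) t * e.wy (η x t) t + e.wt (η x t) t - (e.lam3 (η x t) t * e.zy (η x t) t + e.zt (η x t) t)) / 2) * e.ky (η x t) t + e.sg (η x t) t * (e.lam3 (η x t) t * pD2 T (fun p : ℝ × ℝ => e.k p.1 p.2) (η x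 t, t) (1, 0) (1, 0) + pD2 T (fun p : ℝ × ℝ => e.k p.1 p.2) (η x t, t) (1, 0) (0, 1)))) (Icc (0:ℝ) T) t :=
    hwy_c.sub (HasDerivWithinAt.const_mul (1 / (2 * (2 * α + 1))) (hsg_c.mul hky_c))
  -- the derivative of ∂ₓη along the curve
  have hF' : HasDerivWithinAt (fun s => pD T (fun p : ℝ × ℝ => η p.1 p.2) (x, s) (1, 0)) (((e.wy (η x t) t + e.zy (η x t) t) / 2 + α * ((e.wy (η x t) t - e.zy (η x t) t) / 2)) * pD T (fun p : ℝ × ℝ => η p.1 p.2) (x, t) (1, 0)) (Icc (0:ℝ) T) t := by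
    have h : HasDerivWithinAt (fun s => pD T (fun p : ℝ × ℝ => η p.1 p.2) (x, s) (1, 0))
        (pD2 T (fun p : ℝ × ℝ => η p.1 p.2) (x, t) (0, 1) (1, 0)) (Icc (0:ℝ) T) t := vert_deriv2P hT hreg ht (1, 0)
    rw [symm2P hT hreg hxtS (0, 1) (1, 0)] at h
    have h1 : HasDerivAt (fun x' => pD T (fun p : ℝ × ℝ => η p.1 p.2) (x', t) (0, 1))
        (pD2 T (fun p : ℝ × ℝ => η p.1 p.2) (x, t) (1, 0) (0, 1)) x := horiz_deriv2P hT hreg ht (0, 1)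
    have hfun : (fun x' => pD T (fun p : ℝ × ℝ => η p.1 p.2) (x', t) (0, 1)) = fun x' => e.lam3 (η x' t) t :=
      funext fun x' => idHt x' t ht
    rw [hfun] at h1
    have hl : HasDerivAt (fun y' => e.lam3 y' t) ((e.wy (η x t) t + e.zy (η x t) t) / 2 + α * ((e.wy (η x t) t - e.zy (η x t) t) / 2)) (η x t) :=
      (((e.hwy (η x t) t ht).add (e.hzy (η x t) t ht)).div_const 2).add
        (HasDerivAt.const_mul α (((e.hwy (η x t) t ht).sub (e.hzy (η x t) t ht)).div_const 2))
    have hx2 : HasDerivAt (fun x' => η x' t) (pD T (fun p : ℝ × ℝ => η p.1 p.2) (x, t) (1, 0)) x := horiz_derivP hHd ht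
    have hc := hl.comp x hx2
    have hu := h1.unique hc
    rwa [hu] at h
  -- the y-differentiated PDEs
  have hWt_x : HasDerivAt (fun y => e.wt y t) (pD2 T (fun p : ℝ × ℝ => e.w p.1 p.2) (η x t, t) (1, 0) (0, 1)) (η x t) := by
    have h1 : HasDerivAt (fun y => pD T (fun p : ℝ × ℝ => e.w p.1 p.2) (y, t) (0, 1)) (pD2 T (fun p : ℝ × ℝ => e.w p.1 p.2) (η x t, t) (1, 0) (0, 1)) (η x t) :=
      horiz_deriv2P hT hw2 ht (0, 1)
    have hfun : (fun y => pD T (fun p : ℝ × ℝ => e.w p.1 p.2) (y, t) (0, 1)) = fun y => e.wt y t :=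
      funext fun y => idWt y t ht
    rwa [hfun] at h1
  have hWy_x : HasDerivAt (fun y => e.wy y t) (pD2 T (fun p : ℝ × ℝ => e.w p.1 p.2) (η x t, t) (1, 0) (1, 0)) (η x t) := by
    have h1 : HasDerivAt (fun y => pD T (fun p : ℝ × ℝ => e.w p.1 p.2) (y, t) (1, 0)) (pD2 T (fun p : ℝ × ℝ => e.w p.1 p.2) (η x t, t) (1, 0) (1, 0)) (η x t) :=
      horiz_deriv2P hT hw2 ht (1, 0)
    have hfun : (fun y => pD T (fun p : ℝ × ℝ => e.w p.1 p.2) (y, t) (1, 0)) = fun y => e.wy y t :=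
      funext fun y => idWy y t ht
    rwa [hfun] at h1
  have hKy_x : HasDerivAt (fun y => e.ky y t) (pD2 T (fun p : ℝ × ℝ => e.k p.1 p.2) (η x t, t) (1, 0) (1, 0)) (η x t) := by
    have h1 : HasDerivAt (fun y => pD T (fun p : ℝ × ℝ => e.k p.1 p.2) (y, t) (1, 0)) (pD2 T (fun p : ℝ × ℝ => e.k p.1 p.2) (η x t, t) (1, 0) (1, 0)) (η x t) :=
      horiz_deriv2P hT hk2 ht (1, 0)
    have hfun : (fun y => pD T (fun p : ℝ × ℝ => e.k p.1 p.2) (y, t) (1, 0)) = fun y => e.ky y t :=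
      funext fun y => idKy y t ht
    rwa [hfun] at h1
  have hKt_x : HasDerivAt (fun y => e.kt y t) (pD2 T (fun p : ℝ × ℝ => e.k p.1 p.2) (η x t, t) (1, 0) (0, 1)) (η x t) := by
    have h1 : HasDerivAt (fun y => pD T (fun p : ℝ × ℝ => e.k p.1 p.2) (y, t) (0, 1)) (pD2 T (fun p : ℝ × ℝ => e.k p.1 p.2) (η x t, t) (1, 0) (0, 1)) (η x t) :=
      horiz_deriv2P hT hk2 ht (0, 1)
    have hfun : (fun y => pD T (fun p : ℝ × ℝ => e.k p.1 p.2) (y, t) (0, 1)) = fun y => e.kt y t :=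
      funext fun y => idKt y t ht
    rwa [hfun] at h1
  have hsg_x : HasDerivAt (fun y => (e.w y t - e.z y t) / 2) ((e.wy (η x t) t - e.zy (η x t) t) / 2) (η x t) :=
    ((e.hwy (η x t) t ht).sub (e.hzy (η x t) t ht)).div_const 2
  have hvel_x : HasDerivAt (fun y => (e.w y t + e.z y t) / 2) ((e.wy (η x t) t + e.zy (η x t) t) / 2) (η x t) :=
    ((e.hwy (η x t) t ht).add (e.hzy (η x t) t ht)).div_const 2
  have hLHS1 : HasDerivAt
      (fun y => e.wt y t + ((e.w y t + e.z y t) / 2 + α * ((e.w y t - e.z y t) / 2)) * e.wy y t)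
      (pD2 T (fun p : ℝ × ℝ => e.w p.1 p.2) (η x t, t) (1, 0) (0, 1) + (((e.wy (η x t) t + e.zy (η x t) t) / 2 + α * ((e.wy (η x t) t - e.zy (η x t) t) / 2)) * e.wy (η x t) t + ((e.w (η x t) t + e.z (η x t) t) / 2 + α * ((e.w (η x t) t - e.z (η x t) t) / 2)) * pD2 T (fun p : ℝ × ℝ => e.w p.1 p.2) (η x t, t) (1, 0) (1, 0))) (η x t) :=
    hWt_x.add ((hvel_x.add (HasDerivAt.const_mul α hsg_x)).mul hWy_x)
  have hRHS1 : HasDerivAt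
      (fun y => α / (2 * (2 * α + 1)) * ((e.w y t - e.z y t) / 2) ^ 2 * e.ky y t)
      (α / (2 * (2 * α + 1)) * (2 * ((e.w (η x t) t - e.z (η x t) t) / 2) * ((e.wy (η x t) t - e.zy (η x t) t) / 2)) * e.ky (η x t) t
        + α / (2 * (2 * α + 1)) * ((e.w (η x t) t - e.z (η x t) t) / 2) ^ 2 * pD2 T (fun p : ℝ × ℝ => e.k p.1 p.2) (η x t, t) (1, 0) (1, 0)) (η x t) := by
    have h := (HasDerivAt.const_mul (α / (2 * (2 * α + 1))) (hsg_x.pow 2)).mul hKy_x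
    convert h using 2
    · rfl
    · rfl
    all_goals norm_num <;> ring
  have hfeq1 : (fun y => e.wt y t
        + ((e.w y t + e.z y t) / 2 + α * ((e.w y t - e.z y t) / 2)) * e.wy y t)
      = fun y => α / (2 * (2 * α + 1)) * ((e.w y t - e.z y t) / 2) ^ 2 * e.ky y t :=
    funext fun y => e.pde_w y t ht
  rw [hfeq1] at hLHS1
  have R1 := hLHS1.unique hRHS1
  have hLHS2 : HasDerivAt (fun y => e.kt y t + (e.w y t + e.z y t) / 2 * e.ky y t)
      (pD2 T (fun p : ℝ × ℝ => e.k p.1 p.2) (η x t, t) (1, 0) (0, 1) + ((e.wy (η x t) t + e.zy (η x t) t) / 2 * e.ky (η x t) t + (e.w (η x t) t + e.z (η x t) t) / 2 * pD2 T (fun p : ℝ × ℝ => e.k p.1 p.2) (η x t, t) (1, 0) (1, 0))) (η x t) :=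
    hKt_x.add (hvel_x.mul hKy_x)
  have hfeq2 : (fun y => e.kt y t + (e.w y t + e.z y t) / 2 * e.ky y t) = fun _ => (0:ℝ) :=
    funext fun y => e.pde_k y t ht
  rw [hfeq2] at hLHS2
  have R2 := hLHS2.unique (hasDerivAt_const (η x t) (0:ℝ))
  have Pw := e.pde_w (η x t) t ht
  have Pz := e.pde_z (η x t) t ht
  -- assembling the product rule
  have hdeq : ∀ s ∈ Icc (0:ℝ) T, deriv (fun x' => η x' s) x = pD T (fun p : ℝ × ℝ => η p.1 p.2) (x, s) (1, 0) :=
    fun s hs => (horiz_derivP hHd hs).deriv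
  rw [hdeq t ht]
  have hGp : HasDerivWithinAt (fun s => pD T (fun p : ℝ × ℝ => η p.1 p.2) (x, s) (1, 0) * e.qw (η x s) s)
      (((e.wy (η x t) t + e.zy (η x t) t) / 2 + α * ((e.wy (η x t) t - e.zy (η x t) t) / 2)) * pD T (fun p : ℝ × ℝ => η p.1 p.2) (x, t) (1, 0) * e.qw (η x t) t + pD T (fun p : ℝ × ℝ => η p.1 p.2) (x, t) (1, 0) * (e.lam3 (η x t) t * pD2 T (fun p : ℝ × ℝ => e.w p.1 p.2) (η x t, t) (1, 0) (1, 0) + pD2 T (fun p : ℝ × ℝ => e.w p.1 p.2) (η x t, t) (1, 0) (0, 1) - 1 / (2 * (2 * α + 1)) * (((e.lam3 (η x t) t * e.wy (η x t) t + e.wt (η x t) t - (e.lam3 (η x t) t * e.zy (η x t) t + e.zt (η x t) t)) / 2) * e.ky (η x t) t + e.sg (η x t) t * (e.lam3 (η x t) t * pD2 T (fun p : ℝ × ℝ => e.k p.1 p.2) (η x t, t) (1, 0) (1, 0) + pD2 T (fun p : ℝ × ℝ => e.k p.1 p.2) (η x t, t) (1, 0) (0, 1))))) (Icc (0:ℝ)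 T) t := hF'.mul hQ
  have hfinal := hGp.congr
      (f₁ := fun s => deriv (fun x' => η x' s) x * e.qw (η x s) s)
      (fun s hs => by
        show deriv (fun x' => η x' s) x * e.qw (η x s) s
            = pD T (fun p : ℝ × ℝ => η p.1 p.2) (x, s) (1, 0) * e.qw (η x s) s
        rw [hdeq s hs])
      (by
        show deriv (fun x' => η x' t) x * e.qw (η x t) t
            = pD T (fun p : ℝ × ℝ => η p.1 p.2) (x, t) (1, 0) * e.qw (η x t) t
        rw [hdeq t ht])
  convert hfinal using 1
  · rfl
  · rfl
  simp only [EulerRV.qw, EulerRV.qz, EulerRV.sg, EulerRV.vel, EulerRV.lam3]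
  rw [show α / (4 * (2 * α + 1)) = α / (2 * (2 * α + 1)) / 2 from by rw [div_div]; ring]
  linear_combination (-(pD T (fun p : ℝ × ℝ => η p.1 p.2) (x, t) (1, 0))) * R1 + (pD T (fun p : ℝ × ℝ => η p.1 p.2) (x, t) (1, 0) * (1 / (2 * (2 * α + 1))) * ((e.w (η x t) t - e.z (η x t) t) / 2)) * R2
    + (pD T (fun p : ℝ × ℝ => η p.1 p.2) (x, t) (1, 0) * (1 / (2 * (2 * α + 1))) * e.ky (η x t) t / 2) * Pw
    - (pD T (fun p : ℝ × ℝ => η p.1 p.2) (x, t) (1, 0) * (1 / (2 * (2 * α + 1))) * e.ky (η x t) t / 2) * Pz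
end
end

section
/- Under the Riemann-variable Euler hypotheses, assume additionally that w, z, k are twice continuously differentiable, define q^z := ∂_y z + (1/(2γ)) σ ∂_y k, and let η : ℝ × [0,T] → ℝ be twice continuously differentiable with η(x,0) = x and ∂_t η(x,t) = λ₃(η(x,t), t) for all (x,t). Define Σ(x,t) := σ(η(x,t), t), K(x,t) := k(η(x,t), t), and Ż(x,t) := q^z(η(x,t), t). Then for all (x,t) ∈ ℝ × [0,T], ∂_t [∂_x η · Ż] = 2α ∂_x [Σ · Ż] + (1/(2γ)) (∂_t Σ · ∂_x K − ∂_x Σ · ∂_t K). -/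
noncomputable section

open Set Real

section Helpers

variable {E : Type*} [NormedAddCommGroup E] [NormedSpace ℝ E]

/-- composition of a two-variable function with a curve `(η s, s)` inside `univ ×ˢ Icc 0 T`. -/
lemma EulerRVAux.compCurve {T : ℝ} {F : ℝ × ℝ → E} {f' : ℝ × ℝ →L[ℝ] E} {η : ℝ → ℝ} {v t : ℝ}
    (h : HasFDerivWithinAt F f' (univ ×ˢ Icc (0:ℝ) T) (η t, t))
    (hη : HasDerivWithinAt η v (Icc (0:ℝ) T) t) (_ht : t ∈ Icc (0:ℝ) T) :
    HasDerivWithinAt (fun s => F (η s, s)) (f' (v, 1)) (Icc (0:ℝ) T) t := by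
  have hc : HasDerivWithinAt (fun s => ((η s, s) : ℝ × ℝ)) ((v, 1) : ℝ × ℝ)
      (Icc (0:ℝ) T) t := hη.prodMk (hasDerivWithinAt_id t _)
  exact HasFDerivWithinAt.comp_hasDerivWithinAt (f := fun s => ((η s, s) : ℝ × ℝ)) t h hc
    (fun s hs => by simp [hs])

lemma EulerRVAux.sliceY {T : ℝ} {F : ℝ × ℝ → E} {f' : ℝ × ℝ →L[ℝ] E} {y t : ℝ}
    (h : HasFDerivWithinAt F f' (univ ×ˢ Icc (0:ℝ) T) (y, t)) (ht : t ∈ Icc (0:ℝ) T) :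
    HasDerivAt (fun x => F (x, t)) (f' (1, 0)) y := by
  have hc : HasDerivWithinAt (fun x => ((x, t) : ℝ × ℝ)) ((1, 0) : ℝ × ℝ) (univ : Set ℝ) y :=
    ((hasDerivAt_id y).prodMk (hasDerivAt_const y t)).hasDerivWithinAt
  have := HasFDerivWithinAt.comp_hasDerivWithinAt (f := fun x => ((x, t) : ℝ × ℝ)) y h hc
    (fun s _ => by simp [ht])
  simpa [hasDerivWithinAt_univ, Function.comp_def] using this

lemma EulerRVAux.sliceT {T : ℝ} {F : ℝ × ℝ → E} {f' : ℝ × ℝ →L[ℝ] E} {y t : ℝ}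
    (h : HasFDerivWithinAt F f' (univ ×ˢ Icc (0:ℝ) T) (y, t)) (ht : t ∈ Icc (0:ℝ) T) :
    HasDerivWithinAt (fun s => F (y, s)) (f' (0, 1)) (Icc (0:ℝ) T) t := by
  simpa using EulerRVAux.compCurve (η := fun _ => y) (v := 0) h
    (hasDerivWithinAt_const t _ y) ht

lemma EulerRVAux.uniqueDiffS {T : ℝ} (hT : 0 < T) :
    UniqueDiffOn ℝ ((univ : Set ℝ) ×ˢ Icc (0:ℝ) T) :=
  uniqueDiffOn_univ.prod (uniqueDiffOn_Icc hT)

lemma EulerRVAux.closS {T : ℝ} (hT : 0 < T) {p : ℝ × ℝ}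
    (hp : p ∈ (univ : Set ℝ) ×ˢ Icc (0:ℝ) T) :
    p ∈ closure (interior ((univ : Set ℝ) ×ˢ Icc (0:ℝ) T)) := by
  rw [interior_prod_eq, closure_prod_eq, interior_univ, closure_univ, interior_Icc,
    closure_Ioo hT.ne]
  exact hp

namespace EulerRVAux

/-- second-derivative symmetry for a C² function on the strip. -/
lemma symmS {T : ℝ} (hT : 0 < T) {F : ℝ × ℝ → ℝ}
    (hF : ContDiffOn ℝ 2 F ((univ : Set ℝ) ×ˢ Icc (0:ℝ) T)) {p : ℝ × ℝ}
    (hp : p ∈ (univ : Set ℝ) ×ˢ Icc (0:ℝ) T) (v w : ℝ × ℝ) :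
    fderivWithin ℝ (fderivWithin ℝ F ((univ : Set ℝ) ×ˢ Icc (0:ℝ) T))
        ((univ : Set ℝ) ×ˢ Icc (0:ℝ) T) p v w
      = fderivWithin ℝ (fderivWithin ℝ F ((univ : Set ℝ) ×ˢ Icc (0:ℝ) T))
        ((univ : Set ℝ) ×ˢ Icc (0:ℝ) T) p w v :=
  ((hF p hp).isSymmSndFDerivWithinAt (by simp) (uniqueDiffS hT) (closS hT hp) hp) v w

lemma hasF1 {T : ℝ} {F : ℝ × ℝ → ℝ}
    (hF : ContDiffOn ℝ 2 F ((univ : Set ℝ) ×ˢ Icc (0:ℝ) T)) {p : ℝ × ℝ}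
    (hp : p ∈ (univ : Set ℝ) ×ˢ Icc (0:ℝ) T) :
    HasFDerivWithinAt F (fderivWithin ℝ F ((univ : Set ℝ) ×ˢ Icc (0:ℝ) T) p)
      ((univ : Set ℝ) ×ˢ Icc (0:ℝ) T) p :=
  ((hF.differentiableOn two_ne_zero) p hp).hasFDerivWithinAt

lemma hasF2 {T : ℝ} (hT : 0 < T) {F : ℝ × ℝ → ℝ}
    (hF : ContDiffOn ℝ 2 F ((univ : Set ℝ) ×ˢ Icc (0:ℝ) T)) {p : ℝ × ℝ}
    (hp : p ∈ (univ : Set ℝ) ×ˢ Icc (0:ℝ) T) :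
    HasFDerivWithinAt (fderivWithin ℝ F ((univ : Set ℝ) ×ˢ Icc (0:ℝ) T))
      (fderivWithin ℝ (fderivWithin ℝ F ((univ : Set ℝ) ×ˢ Icc (0:ℝ) T))
        ((univ : Set ℝ) ×ˢ Icc (0:ℝ) T) p)
      ((univ : Set ℝ) ×ˢ Icc (0:ℝ) T) p := by
  have h1 : ContDiffOn ℝ 1 (fderivWithin ℝ F ((univ : Set ℝ) ×ˢ Icc (0:ℝ) T))
      ((univ : Set ℝ) ×ˢ Icc (0:ℝ) T) :=
    hF.fderivWithin (uniqueDiffS hT) (by norm_num)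
  exact ((h1.differentiableOn one_ne_zero) p hp).hasFDerivWithinAt

variable {T : ℝ} {F : ℝ × ℝ → ℝ} {fy ft : ℝ → ℝ → ℝ}

/-- `fy` agrees with the directional within-derivative in direction `(1,0)`. -/
lemma eqY (hF : ContDiffOn ℝ 2 F ((univ : Set ℝ) ×ˢ Icc (0:ℝ) T))
    (hfy : ∀ (y : ℝ), ∀ t ∈ Icc (0:ℝ) T, HasDerivAt (fun x => F (x, t)) (fy y t) y)
    {y t : ℝ} (ht : t ∈ Icc (0:ℝ) T) :
    fy y t = fderivWithin ℝ F ((univ : Set ℝ) ×ˢ Icc (0:ℝ) T) (y, t) (1, 0) :=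
  (hfy y t ht).unique (sliceY (hasF1 hF (by simp [ht])) ht)

lemma eqT (hT : 0 < T) (hF : ContDiffOn ℝ 2 F ((univ : Set ℝ) ×ˢ Icc (0:ℝ) T))
    (hft : ∀ (y : ℝ), ∀ t ∈ Icc (0:ℝ) T,
      HasDerivWithinAt (fun s => F (y, s)) (ft y t) (Icc (0:ℝ) T) t)
    {y t : ℝ} (ht : t ∈ Icc (0:ℝ) T) :
    ft y t = fderivWithin ℝ F ((univ : Set ℝ) ×ˢ Icc (0:ℝ) T) (y, t) (0, 1) := by
  have h1 := (hft y t ht).derivWithin ((uniqueDiffOn_Icc hT) t ht)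
  have h2 := (sliceT (hasF1 hF (p := (y, t)) (by simp [ht])) ht).derivWithin
    ((uniqueDiffOn_Icc hT) t ht)
  rw [← h1, h2]

/-- derivative in `y` of the full within-differential applied to a fixed vector. -/
lemma d2Y (hT : 0 < T) (hF : ContDiffOn ℝ 2 F ((univ : Set ℝ) ×ˢ Icc (0:ℝ) T))
    {y t : ℝ} (ht : t ∈ Icc (0:ℝ) T) (w : ℝ × ℝ) :
    HasDerivAt (fun x => fderivWithin ℝ F ((univ : Set ℝ) ×ˢ Icc (0:ℝ) T) (x, t) w)
      (fderivWithin ℝ (fderivWithin ℝ F ((univ : Set ℝ) ×ˢ Icc (0:ℝ) T))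
        ((univ : Set ℝ) ×ˢ Icc (0:ℝ) T) (y, t) (1, 0) w) y := by
  have h := sliceY (hasF2 hT hF (p := (y, t)) (by simp [ht])) ht
  have := h.clm_apply (hasDerivAt_const y w)
  simpa using this

/-- derivative along the curve `s ↦ (η s, s)` of the within-differential applied to `w`. -/
lemma d2T (hT : 0 < T) (hF : ContDiffOn ℝ 2 F ((univ : Set ℝ) ×ˢ Icc (0:ℝ) T))
    {η : ℝ → ℝ} {v t : ℝ} (hη : HasDerivWithinAt η v (Icc (0:ℝ) T) t)
    (ht : t ∈ Icc (0:ℝ) T) (w : ℝ × ℝ) :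
    HasDerivWithinAt (fun s => fderivWithin ℝ F ((univ : Set ℝ) ×ˢ Icc (0:ℝ) T) (η s, s) w)
      (fderivWithin ℝ (fderivWithin ℝ F ((univ : Set ℝ) ×ˢ Icc (0:ℝ) T))
        ((univ : Set ℝ) ×ˢ Icc (0:ℝ) T) (η t, t) (v, 1) w) (Icc (0:ℝ) T) t := by
  have h := compCurve (hasF2 hT hF (p := (η t, t)) (by simp [ht])) hη ht
  have := h.clm_apply (hasDerivWithinAt_const t _ w)
  simpa using this

lemma clm1_expand (L : (ℝ × ℝ) →L[ℝ] ℝ) (a : ℝ) :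
    L (a, 1) = a * L (1, 0) + L (0, 1) := by
  have h : ((a, 1) : ℝ × ℝ) = a • ((1, 0) : ℝ × ℝ) + ((0, 1) : ℝ × ℝ) := by
    simp [Prod.ext_iff]
  rw [h, map_add, map_smul, smul_eq_mul]

lemma clm2_expand (M : (ℝ × ℝ) →L[ℝ] (ℝ × ℝ) →L[ℝ] ℝ) (a : ℝ) (w : ℝ × ℝ) :
    M (a, 1) w = a * M (1, 0) w + M (0, 1) w := by
  have h : ((a, 1) : ℝ × ℝ) = a • ((1, 0) : ℝ × ℝ) + ((0, 1) : ℝ × ℝ) := by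
    simp [Prod.ext_iff]
  rw [h, map_add, map_smul]
  simp

end EulerRVAux

end Helpers

/-- If `w, z, k` are twice continuously differentiable and
`η` is the (twice continuously differentiable) flow of `λ₃`, then, writing
`Σ = σ∘η`, `K = k∘η`, `Ż = q^z∘η` and `ηₓ = ∂ₓη`, one has
`∂ₜ[ηₓ · Ż] = 2α ∂ₓ[Σ · Ż] + (1/(2γ)) (∂ₜΣ · ∂ₓK - ∂ₓΣ · ∂ₜK)`. -/
theorem euler_qz_along_fast_characteristic
    {α T : ℝ} (hα : 0 < α) (hT : 0 < T) (e : EulerRV α T)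
    (hw2 : ContDiffOn ℝ 2 (fun p : ℝ × ℝ => e.w p.1 p.2) (Set.univ ×ˢ Set.Icc (0:ℝ) T))
    (hz2 : ContDiffOn ℝ 2 (fun p : ℝ × ℝ => e.z p.1 p.2) (Set.univ ×ˢ Set.Icc (0:ℝ) T))
    (hk2 : ContDiffOn ℝ 2 (fun p : ℝ × ℝ => e.k p.1 p.2) (Set.univ ×ˢ Set.Icc (0:ℝ) T))
    (η : ℝ → ℝ → ℝ)
    (hreg : ContDiffOn ℝ 2 (fun p : ℝ × ℝ => η p.1 p.2) (Set.univ ×ˢ Set.Icc (0:ℝ) T))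
    (hη0 : ∀ x : ℝ, η x 0 = x)
    (hη : ∀ (x : ℝ), ∀ t ∈ Set.Icc (0:ℝ) T,
      HasDerivWithinAt (fun s => η x s) (e.lam3 (η x t) t) (Set.Icc (0:ℝ) T) t) :
    ∀ (x : ℝ), ∀ t ∈ Set.Icc (0:ℝ) T,
      HasDerivWithinAt
        (fun s => deriv (fun x' => η x' s) x * e.qz (η x s) s)
        (2 * α * deriv (fun x' => e.sg (η x' t) t * e.qz (η x' t) t) x
          + 1 / (2 * (2 * α + 1))
            * (derivWithin (fun s => e.sg (η x s) s) (Set.Icc (0:ℝ) T) t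
                  * deriv (fun x' => e.k (η x' t) t) x
                - deriv (fun x' => e.sg (η x' t) t) x
                  * derivWithin (fun s => e.k (η x s) s) (Set.Icc (0:ℝ) T) t))
        (Set.Icc (0:ℝ) T) t := by
  intro x t ht
  have hIcc : UniqueDiffWithinAt ℝ (Icc (0:ℝ) T) t := (uniqueDiffOn_Icc hT) t ht
  have hmem : ((η x t, t) : ℝ × ℝ) ∈ (univ : Set ℝ) ×ˢ Icc (0:ℝ) T := ⟨mem_univ _, ht⟩
  have hmemx : ((x, t) : ℝ × ℝ) ∈ (univ : Set ℝ) ×ˢ Icc (0:ℝ) T := ⟨mem_univ _, ht⟩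
  have hcurve : HasDerivWithinAt (fun s => η x s) (e.lam3 (η x t) t) (Icc (0:ℝ) T) t :=
    hη x t ht
  -- the `η`-package: `ηx = ∂ₓη`, `ηtx = ∂ₜ∂ₓη = ∂ₓ∂ₜη = ∂ₓ(λ₃∘η)`
  obtain ⟨ηx, ηtx, hηxAt, hAT, hlamx⟩ :
      ∃ a b : ℝ, HasDerivAt (fun x' => η x' t) a x ∧
        HasDerivWithinAt (fun s => deriv (fun x' => η x' s) x) b (Icc (0:ℝ) T) t ∧
        HasDerivAt (fun x' => e.lam3 (η x' t) t) b x := by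
    refine ⟨fderivWithin ℝ (fun p : ℝ × ℝ => η p.1 p.2)
        ((univ : Set ℝ) ×ˢ Icc (0:ℝ) T) (x, t) (1, 0),
      fderivWithin ℝ (fderivWithin ℝ (fun p : ℝ × ℝ => η p.1 p.2)
          ((univ : Set ℝ) ×ˢ Icc (0:ℝ) T))
        ((univ : Set ℝ) ×ˢ Icc (0:ℝ) T) (x, t) (1, 0) (0, 1),
      EulerRVAux.sliceY (EulerRVAux.hasF1 hreg hmemx) ht, ?_, ?_⟩
    · have h := EulerRVAux.d2T hT hreg (η := fun _ => x) (v := 0)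
        (hasDerivWithinAt_const t _ x) ht (1, 0)
      beta_reduce at h
      have h2 := h.congr
        (f₁ := fun s => deriv (fun x' => η x' s) x)
        (fun s hs => (EulerRVAux.sliceY (EulerRVAux.hasF1 hreg ⟨mem_univ _, hs⟩) hs).deriv)
        ((EulerRVAux.sliceY (EulerRVAux.hasF1 hreg hmemx) ht).deriv)
      rw [EulerRVAux.symmS hT hreg hmemx (0, 1) (1, 0)] at h2
      exact h2
    · have hfun : (fun x' => e.lam3 (η x' t) t)
          = fun x' => fderivWithin ℝ (fun p : ℝ × ℝ => η p.1 p.2)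
              ((univ : Set ℝ) ×ˢ Icc (0:ℝ) T) (x', t) (0, 1) :=
        funext fun y => EulerRVAux.eqT hT hreg hη ht
      rw [hfun]
      exact EulerRVAux.d2Y hT hreg ht (0, 1)
  -- the `z`-package
  obtain ⟨zyy, zty, hzyY, hzyT, hztY⟩ :
      ∃ a b : ℝ, HasDerivAt (fun y => e.zy y t) a (η x t) ∧
        HasDerivWithinAt (fun s => e.zy (η x s) s) (e.lam3 (η x t) t * a + b)
          (Icc (0:ℝ) T) t ∧
        HasDerivAt (fun y => e.zt y t) b (η x t) := by
    refine ⟨fderivWithin ℝ (fderivWithin ℝ (fun p : ℝ × ℝ => e.z p.1 p.2)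
          ((univ : Set ℝ) ×ˢ Icc (0:ℝ) T))
        ((univ : Set ℝ) ×ˢ Icc (0:ℝ) T) (η x t, t) (1, 0) (1, 0),
      fderivWithin ℝ (fderivWithin ℝ (fun p : ℝ × ℝ => e.z p.1 p.2)
          ((univ : Set ℝ) ×ˢ Icc (0:ℝ) T))
        ((univ : Set ℝ) ×ˢ Icc (0:ℝ) T) (η x t, t) (1, 0) (0, 1), ?_, ?_, ?_⟩
    · have hfun : (fun y => e.zy y t)
          = fun y => fderivWithin ℝ (fun p : ℝ × ℝ => e.z p.1 p.2)
              ((univ : Set ℝ) ×ˢ Icc (0:ℝ) T) (y, t) (1, 0) :=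
        funext fun y => EulerRVAux.eqY hz2 e.hzy ht
      rw [hfun]
      exact EulerRVAux.d2Y hT hz2 ht (1, 0)
    · have h := EulerRVAux.d2T hT hz2 hcurve ht (1, 0)
      have h2 := h.congr
        (f₁ := fun s => e.zy (η x s) s)
        (fun s hs => EulerRVAux.eqY hz2 e.hzy hs)
        (EulerRVAux.eqY hz2 e.hzy ht)
      rw [EulerRVAux.clm2_expand, EulerRVAux.symmS hT hz2 hmem (0, 1) (1, 0)] at h2
      exact h2
    · have hfun : (fun y => e.zt y t)
          = fun y => fderivWithin ℝ (fun p : ℝ × ℝ => e.z p.1 p.2)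
              ((univ : Set ℝ) ×ˢ Icc (0:ℝ) T) (y, t) (0, 1) :=
        funext fun y => EulerRVAux.eqT hT hz2 e.hzt ht
      rw [hfun]
      exact EulerRVAux.d2Y hT hz2 ht (0, 1)
  -- the `k`-package
  obtain ⟨kyy, kty, hkyY, hkyT, hktY⟩ :
      ∃ a b : ℝ, HasDerivAt (fun y => e.ky y t) a (η x t) ∧
        HasDerivWithinAt (fun s => e.ky (η x s) s) (e.lam3 (η x t) t * a + b)
          (Icc (0:ℝ) T) t ∧
        HasDerivAt (fun y => e.kt y t) b (η x t) := by
    refine ⟨fderivWithin ℝ (fderivWithin ℝ (fun p : ℝ × ℝ => e.k p.1 p.2)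
          ((univ : Set ℝ) ×ˢ Icc (0:ℝ) T))
        ((univ : Set ℝ) ×ˢ Icc (0:ℝ) T) (η x t, t) (1, 0) (1, 0),
      fderivWithin ℝ (fderivWithin ℝ (fun p : ℝ × ℝ => e.k p.1 p.2)
          ((univ : Set ℝ) ×ˢ Icc (0:ℝ) T))
        ((univ : Set ℝ) ×ˢ Icc (0:ℝ) T) (η x t, t) (1, 0) (0, 1), ?_, ?_, ?_⟩
    · have hfun : (fun y => e.ky y t)
          = fun y => fderivWithin ℝ (fun p : ℝ × ℝ => e.k p.1 p.2)
              ((univ : Set ℝ) ×ˢ Icc (0:ℝ) T) (y, t) (1, 0) :=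
        funext fun y => EulerRVAux.eqY hk2 e.hky ht
      rw [hfun]
      exact EulerRVAux.d2Y hT hk2 ht (1, 0)
    · have h := EulerRVAux.d2T hT hk2 hcurve ht (1, 0)
      have h2 := h.congr
        (f₁ := fun s => e.ky (η x s) s)
        (fun s hs => EulerRVAux.eqY hk2 e.hky hs)
        (EulerRVAux.eqY hk2 e.hky ht)
      rw [EulerRVAux.clm2_expand, EulerRVAux.symmS hT hk2 hmem (0, 1) (1, 0)] at h2
      exact h2
    · have hfun : (fun y => e.kt y t)
          = fun y => fderivWithin ℝ (fun p : ℝ × ℝ => e.k p.1 p.2)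
              ((univ : Set ℝ) ×ˢ Icc (0:ℝ) T) (y, t) (0, 1) :=
        funext fun y => EulerRVAux.eqT hT hk2 e.hkt ht
      rw [hfun]
      exact EulerRVAux.d2Y hT hk2 ht (0, 1)
  -- first-order derivatives along the fast characteristic
  have hWT : HasDerivWithinAt (fun s => e.w (η x s) s)
      (e.lam3 (η x t) t * e.wy (η x t) t + e.wt (η x t) t) (Icc (0:ℝ) T) t := by
    have h := EulerRVAux.compCurve (EulerRVAux.hasF1 hw2 hmem) hcurve ht
    rwa [EulerRVAux.clm1_expand, ← EulerRVAux.eqY hw2 e.hwy ht,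
      ← EulerRVAux.eqT hT hw2 e.hwt ht] at h
  have hZT : HasDerivWithinAt (fun s => e.z (η x s) s)
      (e.lam3 (η x t) t * e.zy (η x t) t + e.zt (η x t) t) (Icc (0:ℝ) T) t := by
    have h := EulerRVAux.compCurve (EulerRVAux.hasF1 hz2 hmem) hcurve ht
    rwa [EulerRVAux.clm1_expand, ← EulerRVAux.eqY hz2 e.hzy ht,
      ← EulerRVAux.eqT hT hz2 e.hzt ht] at h
  have hKT : HasDerivWithinAt (fun s => e.k (η x s) s)
      (e.lam3 (η x t) t * e.ky (η x t) t + e.kt (η x t) t) (Icc (0:ℝ) T) t := by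
    have h := EulerRVAux.compCurve (EulerRVAux.hasF1 hk2 hmem) hcurve ht
    rwa [EulerRVAux.clm1_expand, ← EulerRVAux.eqY hk2 e.hky ht,
      ← EulerRVAux.eqT hT hk2 e.hkt ht] at h
  have hST : HasDerivWithinAt (fun s => e.sg (η x s) s)
      ((e.lam3 (η x t) t * e.wy (η x t) t + e.wt (η x t) t
        - (e.lam3 (η x t) t * e.zy (η x t) t + e.zt (η x t) t)) / 2) (Icc (0:ℝ) T) t :=
    (hWT.sub hZT).div_const 2
  have hQT : HasDerivWithinAt (fun s => e.qz (η x s) s)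
      (e.lam3 (η x t) t * zyy + zty
        + 1 / (2 * (2 * α + 1)) *
          ((e.lam3 (η x t) t * e.wy (η x t) t + e.wt (η x t) t
            - (e.lam3 (η x t) t * e.zy (η x t) t + e.zt (η x t) t)) / 2 * e.ky (η x t) t
            + e.sg (η x t) t * (e.lam3 (η x t) t * kyy + kty))) (Icc (0:ℝ) T) t :=
    hzyT.add ((hST.mul hkyT).const_mul _)
  -- first-order derivatives in the `x` (label) direction
  have hWx : HasDerivAt (fun x' => e.w (η x' t) t) (e.wy (η x t) t * ηx) x :=
    (e.hwy (η x t) t ht).comp (h := fun x' => η x' t) x hηxAt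
  have hZx : HasDerivAt (fun x' => e.z (η x' t) t) (e.zy (η x t) t * ηx) x :=
    (e.hzy (η x t) t ht).comp (h := fun x' => η x' t) x hηxAt
  have hKx : HasDerivAt (fun x' => e.k (η x' t) t) (e.ky (η x t) t * ηx) x :=
    (e.hky (η x t) t ht).comp (h := fun x' => η x' t) x hηxAt
  have hSx : HasDerivAt (fun x' => e.sg (η x' t) t)
      ((e.wy (η x t) t * ηx - e.zy (η x t) t * ηx) / 2) x :=
    (hWx.sub hZx).div_const 2
  have hzyx : HasDerivAt (fun x' => e.zy (η x' t) t) (zyy * ηx) x := hzyY.comp (h := fun x' => η x' t) x hηxAt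
  have hkyx : HasDerivAt (fun x' => e.ky (η x' t) t) (kyy * ηx) x := hkyY.comp (h := fun x' => η x' t) x hηxAt
  have hQx : HasDerivAt (fun x' => e.qz (η x' t) t)
      (zyy * ηx + 1 / (2 * (2 * α + 1)) *
        ((e.wy (η x t) t * ηx - e.zy (η x t) t * ηx) / 2 * e.ky (η x t) t
          + e.sg (η x t) t * (kyy * ηx))) x :=
    hzyx.add ((hSx.mul hkyx).const_mul _)
  have hSQx : HasDerivAt (fun x' => e.sg (η x' t) t * e.qz (η x' t) t)
      ((e.wy (η x t) t * ηx - e.zy (η x t) t * ηx) / 2 * e.qz (η x t) t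
        + e.sg (η x t) t * (zyy * ηx + 1 / (2 * (2 * α + 1)) *
          ((e.wy (η x t) t * ηx - e.zy (η x t) t * ηx) / 2 * e.ky (η x t) t
            + e.sg (η x t) t * (kyy * ηx)))) x :=
    hSx.mul hQx
  -- value of `∂ₜ∂ₓη` via the chain rule on `λ₃∘η`
  have hlam_src : HasDerivAt (fun x' => e.lam3 (η x' t) t)
      ((e.wy (η x t) t * ηx + e.zy (η x t) t * ηx) / 2
        + α * ((e.wy (η x t) t * ηx - e.zy (η x t) t * ηx) / 2)) x :=
    ((hWx.add hZx).div_const 2).add (((hWx.sub hZx).div_const 2).const_mul α)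
  have hA'val : ηtx = (e.wy (η x t) t * ηx + e.zy (η x t) t * ηx) / 2
      + α * ((e.wy (η x t) t * ηx - e.zy (η x t) t * ηx) / 2) := hlamx.unique hlam_src
  -- differentiated PDE for `z` in the `y` direction
  have hwY := e.hwy (η x t) t ht
  have hzY := e.hzy (η x t) t ht
  have hkY := e.hky (η x t) t ht
  have R1 : zty = (α / (2 * (2 * α + 1))
        * ((2:ℕ) * ((e.w (η x t) t - e.z (η x t) t) / 2) ^ (2 - 1)
            * ((e.wy (η x t) t - e.zy (η x t) t) / 2)) * e.ky (η x t) t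
      + α / (2 * (2 * α + 1)) * ((e.w (η x t) t - e.z (η x t) t) / 2) ^ 2 * kyy)
      - (((e.wy (η x t) t + e.zy (η x t) t) / 2
          - α * ((e.wy (η x t) t - e.zy (η x t) t) / 2)) * e.zy (η x t) t
        + ((e.w (η x t) t + e.z (η x t) t) / 2
          - α * ((e.w (η x t) t - e.z (η x t) t) / 2)) * zyy) := by
    have hfun : (fun y => e.zt y t) = fun y =>
        α / (2 * (2 * α + 1)) * ((e.w y t - e.z y t) / 2) ^ 2 * e.ky y t
          - ((e.w y t + e.z y t) / 2 - α * ((e.w y t - e.z y t) / 2)) * e.zy y t := by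
      funext y
      have h := e.pde_z y t ht
      linarith
    rw [hfun] at hztY
    have hsrc : HasDerivAt (fun y =>
        α / (2 * (2 * α + 1)) * ((e.w y t - e.z y t) / 2) ^ 2 * e.ky y t
          - ((e.w y t + e.z y t) / 2 - α * ((e.w y t - e.z y t) / 2)) * e.zy y t)
        _ (η x t) :=
      ((((hwY.sub hzY).div_const 2).pow 2).const_mul
        (α / (2 * (2 * α + 1)))).mul hkyY |>.sub
        ((((hwY.add hzY).div_const 2).sub
          (((hwY.sub hzY).div_const 2).const_mul α)).mul hzyY)
    exact hztY.unique hsrc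
  -- differentiated PDE for `k` in the `y` direction
  have R2 : kty = -(((e.wy (η x t) t + e.zy (η x t) t) / 2) * e.ky (η x t) t
      + ((e.w (η x t) t + e.z (η x t) t) / 2) * kyy) := by
    have hfun : (fun y => e.kt y t) = fun y =>
        -(((e.w y t + e.z y t) / 2) * e.ky y t) := by
      funext y
      have h := e.pde_k y t ht
      linarith
    rw [hfun] at hktY
    have hsrc : HasDerivAt (fun y => -(((e.w y t + e.z y t) / 2) * e.ky y t))
        _ (η x t) := (((hwY.add hzY).div_const 2).mul hkyY).neg
    exact hktY.unique hsrc
  have hktpt : e.kt (η x t) t = -(((e.w (η x t) t + e.z (η x t) t) / 2) * e.ky (η x t) t) := by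
    have h := e.pde_k (η x t) t ht
    linarith
  -- the main derivative computation
  have hmain : HasDerivWithinAt
      (fun s => deriv (fun x' => η x' s) x * e.qz (η x s) s)
      (ηtx * e.qz (η x t) t + deriv (fun x' => η x' t) x *
        (e.lam3 (η x t) t * zyy + zty
          + 1 / (2 * (2 * α + 1)) *
            ((e.lam3 (η x t) t * e.wy (η x t) t + e.wt (η x t) t
              - (e.lam3 (η x t) t * e.zy (η x t) t + e.zt (η x t) t)) / 2 * e.ky (η x t) t
              + e.sg (η x t) t * (e.lam3 (η x t) t * kyy + kty))))
      (Icc (0:ℝ) T) t := hAT.mul hQT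
  have key : (2 * α * deriv (fun x' => e.sg (η x' t) t * e.qz (η x' t) t) x
      + 1 / (2 * (2 * α + 1))
        * (derivWithin (fun s => e.sg (η x s) s) (Icc (0:ℝ) T) t
              * deriv (fun x' => e.k (η x' t) t) x
            - deriv (fun x' => e.sg (η x' t) t) x
              * derivWithin (fun s => e.k (η x s) s) (Icc (0:ℝ) T) t))
      = ηtx * e.qz (η x t) t + deriv (fun x' => η x' t) x *
        (e.lam3 (η x t) t * zyy + zty
          + 1 / (2 * (2 * α + 1)) *
            ((e.lam3 (η x t) t * e.wy (η x t) t + e.wt (η x t) t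
              - (e.lam3 (η x t) t * e.zy (η x t) t + e.zt (η x t) t)) / 2 * e.ky (η x t) t
              + e.sg (η x t) t * (e.lam3 (η x t) t * kyy + kty))) := by
    rw [hST.derivWithin hIcc, hKT.derivWithin hIcc, hSx.deriv, hKx.deriv, hSQx.deriv,
      hηxAt.deriv, R1, R2, hktpt, hA'val]
    simp only [EulerRV.qz, EulerRV.sg, EulerRV.lam3, EulerRV.vel]
    have hγ : (2 * (2 * α + 1)) ≠ 0 := by positivity
    field_simp
    ring
  rw [key]
  exact hmain
end
end

section
/- (Quantitative form of the equivalence of the Eulerian and Lagrangian blowup criteria.) Under the Riemann-variable Euler hypotheses, let η : ℝ × [0,T] → ℝ be twice continuously differentiable with η(x,0) = x and ∂_t η(x,t) = λ₃(η(x,t), t) for all (x,t). Suppose there is M ≥ 0 such that for every t ∈ [0,T] the suprema sup_y |∂_y w(y,t)| and sup_y |∂_y z(y,t)| are finite and ∫₀ᵀ (sup_y |∂_y w(y,t)| + sup_y |∂_y z(y,t)|) dt ≤ M. Then for all (x,t) ∈ ℝ × [0,T]: e^{−αM} ≤ σ(η(x,t),t)/σ(x,0) ≤ e^{αM} and e^{−max(1,α)·M}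 ≤ ∂_x η(x,t) ≤ e^{max(1,α)·M}; in particular ∂_x η is bounded away from 0 uniformly on ℝ × [0,T]. -/
noncomputable section

open Set Real


open MeasureTheory intervalIntegral Asymptotics




lemma log_gronwall {T M : ℝ} (hT : 0 ≤ T) (hM : 0 ≤ M) (f g B : ℝ → ℝ)
    (hf : ∀ t ∈ Icc (0:ℝ) T, HasDerivWithinAt f (g t * f t) (Icc (0:ℝ) T) t)
    (hpos : ∀ t ∈ Icc (0:ℝ) T, 0 < f t)
    (hg : ContinuousOn g (Icc (0:ℝ) T))
    (hbd : ∀ t ∈ Icc (0:ℝ) T, |g t| ≤ B t)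
    (hBi : IntervalIntegrable B volume 0 T)
    (hBM : (∫ t in (0:ℝ)..T, B t) ≤ M) :
    ∀ t ∈ Icc (0:ℝ) T, exp (-M) ≤ f t / f 0 ∧ f t / f 0 ≤ exp M := by
  intro t ht
  have h0T : (0:ℝ) ∈ Icc (0:ℝ) T := ⟨le_rfl, hT⟩
  have hcf : ContinuousOn f (Icc (0:ℝ) T) := fun s hs => (hf s hs).continuousWithinAt
  have hsub : Icc (0:ℝ) t ⊆ Icc (0:ℝ) T := Icc_subset_Icc le_rfl ht.2
  have hgi : IntervalIntegrable g volume 0 t :=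
    (hg.mono hsub).intervalIntegrable_of_Icc ht.1
  have hBit : IntervalIntegrable B volume 0 t :=
    hBi.mono_set (by rw [uIcc_of_le ht.1, uIcc_of_le hT]; exact hsub)
  have hftc : (∫ s in (0:ℝ)..t, g s) = Real.log (f t) - Real.log (f 0) := by
    apply integral_eq_sub_of_hasDeriv_right_of_le ht.1
    · exact ContinuousOn.log (hcf.mono hsub) (fun s hs => (hpos s (hsub hs)).ne')
    · intro s hs
      have hsT : s ∈ Icc (0:ℝ) T := hsub (Ioo_subset_Icc_self hs)
      have h1 : HasDerivWithinAt (fun u => Real.log (f u))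
          ((g s * f s) / f s) (Icc (0:ℝ) T) s := (hf s hsT).log (hpos s hsT).ne'
      rw [mul_div_assoc, div_self (hpos s hsT).ne', mul_one] at h1
      exact h1.mono_of_mem_nhdsWithin
        (Icc_mem_nhdsGT_of_mem ⟨hsT.1, lt_of_lt_of_le hs.2 ht.2⟩)
    · exact hgi
  have habs : |Real.log (f t) - Real.log (f 0)| ≤ M := by
    rw [← hftc]
    have hBnn : (0:ℝ) ≤ ∫ s in (0:ℝ)..t, B s :=
      intervalIntegral.integral_nonneg ht.1
        (fun s hs => le_trans (abs_nonneg _) (hbd s (hsub hs)))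
    have h1 : |∫ s in (0:ℝ)..t, g s| ≤ ∫ s in (0:ℝ)..t, B s := by
      rw [← Real.norm_eq_abs, ← abs_of_nonneg hBnn]
      apply intervalIntegral.norm_integral_le_abs_of_norm_le _ hBit
      filter_upwards [ae_restrict_mem measurableSet_uIoc] with s hs
      have : s ∈ Icc (0:ℝ) T := by
        rw [uIoc_of_le ht.1] at hs
        exact hsub (Ioc_subset_Icc_self hs)
      simpa using hbd s this
    refine h1.trans (le_trans ?_ hBM)
    apply intervalIntegral.integral_mono_interval le_rfl ht.1 ht.2 _ hBi
    filter_upwards [ae_restrict_mem measurableSet_Ioc] with s hs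
    exact le_trans (abs_nonneg _) (hbd s (Ioc_subset_Icc_self hs))
  have hratio : f t / f 0 = Real.exp (Real.log (f t) - Real.log (f 0)) := by
    rw [Real.exp_sub, Real.exp_log (hpos t ht), Real.exp_log (hpos 0 h0T)]
  rw [hratio]
  rw [abs_le] at habs
  exact ⟨Real.exp_le_exp.2 (by linarith [habs.1]), Real.exp_le_exp.2 habs.2⟩




lemma hasFDerivWithinAt_of_partials {T : ℝ} (f fy ft : ℝ → ℝ → ℝ)
    (hy : ∀ (y : ℝ), ∀ t ∈ Icc (0:ℝ) T, HasDerivAt (fun x => f x t) (fy y t) y)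
    (ht : ∀ (y : ℝ), ∀ t ∈ Icc (0:ℝ) T,
      HasDerivWithinAt (fun s => f y s) (ft y t) (Icc (0:ℝ) T) t)
    (hfy : ContinuousOn (fun p : ℝ × ℝ => fy p.1 p.2) (univ ×ˢ Icc (0:ℝ) T))
    {y t : ℝ} (htm : t ∈ Icc (0:ℝ) T) :
    HasFDerivWithinAt (fun p : ℝ × ℝ => f p.1 p.2)
      (fy y t • ContinuousLinearMap.fst ℝ ℝ ℝ + ft y t • ContinuousLinearMap.snd ℝ ℝ ℝ)
      (univ ×ˢ Icc (0:ℝ) T) (y, t) := by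
  set S : Set (ℝ × ℝ) := univ ×ˢ Icc (0:ℝ) T with hS
  rw [hasFDerivWithinAt_iff_isLittleO]
  have key : (fun p : ℝ × ℝ => f p.1 p.2 - f y t -
      (fy y t * (p.1 - y) + ft y t * (p.2 - t))) =
      (fun p : ℝ × ℝ => (f p.1 p.2 - f y p.2 - fy y t * (p.1 - y)) +
        (f y p.2 - f y t - ft y t * (p.2 - t))) := by
    funext p; ring
  have hform : ∀ p : ℝ × ℝ,
      (fy y t • ContinuousLinearMap.fst ℝ ℝ ℝ + ft y t • ContinuousLinearMap.snd ℝ ℝ ℝ)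
        (p - (y, t)) = fy y t * (p.1 - y) + ft y t * (p.2 - t) := by
    intro p; simp [ContinuousLinearMap.smul_apply]
  have e2 : (fun p : ℝ × ℝ => f y p.2 - f y t - ft y t * (p.2 - t))
      =o[nhdsWithin (y, t) S] (fun p : ℝ × ℝ => p - (y, t)) := by
    have h1 : (fun s : ℝ => f y s - f y t - ft y t * (s - t))
        =o[nhdsWithin t (Icc (0:ℝ) T)] (fun s => s - t) := by
      have := (ht y t htm)
      rw [hasDerivWithinAt_iff_isLittleO] at this
      simpa [smul_eq_mul, mul_comm] using this
    have htend : Filter.Tendsto (fun p : ℝ × ℝ => p.2) (nhdsWithin (y, t) S)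
        (nhdsWithin t (Icc (0:ℝ) T)) := by
      apply Filter.Tendsto.mono_left _ (nhdsWithin_mono _ (le_refl S))
      refine tendsto_nhdsWithin_of_tendsto_nhds_of_eventually_within _
        (Filter.Tendsto.mono_left (continuous_snd.tendsto (y, t)) nhdsWithin_le_nhds) ?_
      filter_upwards [self_mem_nhdsWithin] with p hp
      exact hp.2
    have := h1.comp_tendsto htend
    refine this.trans_isBigO ?_
    apply isBigO_of_le
    intro p
    simpa using (norm_snd_le (p - (y, t)))
  have e1 : (fun p : ℝ × ℝ => f p.1 p.2 - f y p.2 - fy y t * (p.1 - y))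
      =o[nhdsWithin (y, t) S] (fun p : ℝ × ℝ => p - (y, t)) := by
    rw [isLittleO_iff]
    intro ε hε
    have hcw : ContinuousWithinAt (fun p : ℝ × ℝ => fy p.1 p.2) S (y, t) :=
      hfy (y, t) ⟨trivial, htm⟩
    rw [Metric.continuousWithinAt_iff] at hcw
    obtain ⟨δ, hδ, hcw⟩ := hcw ε hε
    have hmem : S ∩ Metric.ball (y, t) δ ∈ nhdsWithin (y, t) S :=
      Filter.inter_mem self_mem_nhdsWithin
        (nhdsWithin_le_nhds (Metric.ball_mem_nhds _ hδ))
    filter_upwards [hmem] with p hp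
    obtain ⟨hpS, hpb⟩ := hp
    have hp2 : p.2 ∈ Icc (0:ℝ) T := hpS.2
    -- MVT on the segment from y to p.1
    have hconv : Convex ℝ (uIcc y p.1) := convex_uIcc _ _
    have hbound : ∀ u ∈ uIcc y p.1,
        ‖fy u p.2 - fy y t‖ ≤ ε := by
      intro u hu
      have hdist : dist (u, p.2) (y, t) < δ := by
        have hd : dist p (y, t) < δ := hpb
        rw [Prod.dist_eq] at hd
        rw [Prod.dist_eq]
        have h1 : dist u y ≤ dist p.1 y := by
          rw [Real.dist_eq, Real.dist_eq]
          rcases le_total y p.1 with h | h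
          · rw [uIcc_of_le h] at hu
            rw [abs_of_nonneg (by linarith [hu.1]), abs_of_nonneg (by linarith)]
            linarith [hu.2]
          · rw [uIcc_of_ge h] at hu
            rw [abs_of_nonpos (by linarith [hu.2]), abs_of_nonpos (by linarith)]
            linarith [hu.1]
        have h2 : dist p.1 y < δ := lt_of_le_of_lt (le_max_left _ _) hd
        have h3 : dist p.2 t < δ := lt_of_le_of_lt (le_max_right _ _) hd
        exact max_lt (lt_of_le_of_lt h1 h2) h3
      have := hcw (show (u, p.2) ∈ S from ⟨trivial, hp2⟩) hdist
      rw [Real.dist_eq] at this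
      exact le_of_lt (by simpa [Real.norm_eq_abs] using this)
    have hderiv : ∀ u ∈ uIcc y p.1,
        HasDerivWithinAt (fun v => f v p.2 - fy y t * v)
          (fy u p.2 - fy y t) (uIcc y p.1) u := by
      intro u hu
      have h := (hy u p.2 hp2).sub ((hasDerivAt_id' u).const_mul (fy y t))
      rw [mul_one] at h
      exact h.hasDerivWithinAt
    have := hconv.norm_image_sub_le_of_norm_hasDerivWithin_le hderiv hbound
      (left_mem_uIcc) (right_mem_uIcc)
    have heq : f p.1 p.2 - fy y t * p.1 - (f y p.2 - fy y t * y) =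
        f p.1 p.2 - f y p.2 - fy y t * (p.1 - y) := by ring
    rw [heq] at this
    refine le_trans this ?_
    have : ‖p.1 - y‖ ≤ ‖p - (y, t)‖ := by
      simpa using (norm_fst_le (p - (y, t)))
    nlinarith [norm_nonneg (p - (y,t)), le_of_lt hε]
  have := e1.add e2
  refine this.congr' ?_ (Filter.Eventually.of_forall fun p => rfl)
  filter_upwards with p
  rw [hform p]
  have := congrFun key p
  rw [this]

/-- Quantitative equivalence of the Eulerian and Lagrangian
blowup criteria.  If `A t` and `B t` are finite bounds for
`sup_y |∂_y w(y,t)|` and `sup_y |∂_y z(y,t)|` with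
`∫₀ᵀ (A + B) ≤ M`, then along the (twice continuously differentiable) flow `η`
of `λ₃`: `e^(-αM) ≤ σ(η(x,t),t)/σ(x,0) ≤ e^(αM)` and
`e^(-max(1,α)·M) ≤ ∂ₓη(x,t) ≤ e^(max(1,α)·M)`; in particular `∂ₓη` is bounded
away from `0` uniformly on `ℝ × [0,T]`. -/
theorem euler_blowup_criteria_equivalence
    {α T : ℝ} (hα : 0 < α) (hT : 0 < T) (e : EulerRV α T)
    (η : ℝ → ℝ → ℝ)
    (hreg : ContDiffOn ℝ 2 (fun p : ℝ × ℝ => η p.1 p.2) (Set.univ ×ˢ Set.Icc (0:ℝ) T))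
    (hη0 : ∀ x : ℝ, η x 0 = x)
    (hη : ∀ (x : ℝ), ∀ t ∈ Set.Icc (0:ℝ) T,
      HasDerivWithinAt (fun s => η x s) (e.lam3 (η x t) t) (Set.Icc (0:ℝ) T) t)
    (M : ℝ) (hM : 0 ≤ M) (A B : ℝ → ℝ)
    (hA : ∀ t ∈ Set.Icc (0:ℝ) T, ∀ y : ℝ, |e.wy y t| ≤ A t)
    (hB : ∀ t ∈ Set.Icc (0:ℝ) T, ∀ y : ℝ, |e.zy y t| ≤ B t)
    (hAB : IntervalIntegrable (fun t => A t + B t) MeasureTheory.volume 0 T)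
    (hInt : (∫ t in (0:ℝ)..T, (A t + B t)) ≤ M) :
    ∀ (x : ℝ), ∀ t ∈ Set.Icc (0:ℝ) T,
      Real.exp (-(α * M)) ≤ e.sg (η x t) t / e.sg x 0 ∧
      e.sg (η x t) t / e.sg x 0 ≤ Real.exp (α * M) ∧
      Real.exp (-(max 1 α * M)) ≤ deriv (fun x' => η x' t) x ∧
      deriv (fun x' => η x' t) x ≤ Real.exp (max 1 α * M) := by
  
  intro x
  set S : Set (ℝ × ℝ) := Set.univ ×ˢ Set.Icc (0:ℝ) T with hSdef
  have hTle : (0:ℝ) ≤ T := hT.le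
  have h0m : (0:ℝ) ∈ Set.Icc (0:ℝ) T := ⟨le_rfl, hTle⟩
  have hUD : UniqueDiffOn ℝ S := UniqueDiffOn.prod uniqueDiffOn_univ (uniqueDiffOn_Icc hT)
  have hηc : ContinuousOn (fun t => η x t) (Set.Icc (0:ℝ) T) :=
    fun t ht => (hη x t ht).continuousWithinAt
  have hcurvec : ContinuousOn (fun t => ((η x t, t) : ℝ × ℝ)) (Set.Icc (0:ℝ) T) :=
    hηc.prodMk (continuousOn_id)
  have hmapsc : Set.MapsTo (fun t => ((η x t, t) : ℝ × ℝ)) (Set.Icc (0:ℝ) T) S :=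
    fun t ht => ⟨Set.mem_univ _, ht⟩
  have hA0 : ∀ t ∈ Set.Icc (0:ℝ) T, 0 ≤ A t := fun t ht => (abs_nonneg _).trans (hA t ht 0)
  have hB0 : ∀ t ∈ Set.Icc (0:ℝ) T, 0 ≤ B t := fun t ht => (abs_nonneg _).trans (hB t ht 0)
  -- ### Part 1 : bounds on σ along the characteristic
  have part1 : ∀ t ∈ Set.Icc (0:ℝ) T,
      Real.exp (-(α * M)) ≤ e.sg (η x t) t / e.sg x 0 ∧
      e.sg (η x t) t / e.sg x 0 ≤ Real.exp (α * M) := by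
    have hres := log_gronwall (M := α * M) hTle (by positivity) (fun t => e.sg (η x t) t)
      (fun t => -(α * e.zy (η x t) t)) (fun t => α * (A t + B t))
      (by -- derivative of σ along the flow
        intro t ht
        have hcurve : HasDerivWithinAt (fun s => ((η x s, s) : ℝ × ℝ))
            ((e.lam3 (η x t) t, 1)) (Set.Icc (0:ℝ) T) t :=
          (hη x t ht).prodMk (hasDerivWithinAt_id t _)
        have Hw := hasFDerivWithinAt_of_partials e.w e.wy e.wt e.hwy e.hwt e.cont_wy
          (y := η x t) ht
        have Hz := hasFDerivWithinAt_of_partials e.z e.zy e.zt e.hzy e.hzt e.cont_zy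
          (y := η x t) ht
        have hw : HasDerivWithinAt (fun s => e.w (η x s) s)
            (e.wy (η x t) t * e.lam3 (η x t) t + e.wt (η x t) t) (Set.Icc (0:ℝ) T) t := by
          have h := Hw.comp_hasDerivWithinAt_of_eq t hcurve hmapsc rfl
          simpa [Function.comp_def] using h
        have hz : HasDerivWithinAt (fun s => e.z (η x s) s)
            (e.zy (η x t) t * e.lam3 (η x t) t + e.zt (η x t) t) (Set.Icc (0:ℝ) T) t := by
          have h := Hz.comp_hasDerivWithinAt_of_eq t hcurve hmapsc rfl
          simpa [Function.comp_def] using h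
        have hval : (e.wy (η x t) t * e.lam3 (η x t) t + e.wt (η x t) t -
            (e.zy (η x t) t * e.lam3 (η x t) t + e.zt (η x t) t)) / 2
            = -(α * e.zy (η x t) t) * e.sg (η x t) t := by
          have pw := e.pde_w (η x t) t ht
          have pz := e.pde_z (η x t) t ht
          simp only [EulerRV.sg, EulerRV.lam3, EulerRV.vel]
          linear_combination (pw - pz) / 2
        have hφ : HasDerivWithinAt (fun s => e.sg (η x s) s)
            ((e.wy (η x t) t * e.lam3 (η x t) t + e.wt (η x t) t -
            (e.zy (η x t) t * e.lam3 (η x t) t + e.zt (η x t) t)) / 2)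
            (Set.Icc (0:ℝ) T) t := by
          simp only [EulerRV.sg]
          exact (hw.sub hz).div_const 2
        rw [hval] at hφ
        exact hφ)
      (fun t ht => e.sigma_pos (η x t) t ht)
      (by -- continuity of the coefficient
        have hc : ContinuousOn (fun t => e.zy (η x t) t) (Set.Icc (0:ℝ) T) :=
          e.cont_zy.comp hcurvec hmapsc
        exact (continuousOn_const.mul hc).neg)
      (by -- bound on the coefficient
        intro t ht
        rw [abs_neg, abs_mul, abs_of_pos hα]
        exact mul_le_mul_of_nonneg_left
          ((hB t ht (η x t)).trans (le_add_of_nonneg_left (hA0 t ht))) hα.le)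
      (hAB.const_mul α)
      (by rw [intervalIntegral.integral_const_mul]
          exact mul_le_mul_of_nonneg_left hInt hα.le)
    intro t ht
    have h := hres t ht
    simp only [hη0] at h
    exact h
  -- ### Part 2 : bounds on ∂ₓη
  have hdiff : DifferentiableOn ℝ (fun p : ℝ × ℝ => η p.1 p.2) S :=
    hreg.differentiableOn two_ne_zero
  have hft : ∀ (x' : ℝ), ∀ t ∈ Set.Icc (0:ℝ) T,
      (fderivWithin ℝ (fun p : ℝ × ℝ => η p.1 p.2) S (x', t)) (0, 1) = e.lam3 (η x' t) t := by
    intro x' t ht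
    have hcv : HasDerivWithinAt (fun s => ((x', s) : ℝ × ℝ)) (((0:ℝ), (1:ℝ)))
        (Set.Icc (0:ℝ) T) t :=
      (hasDerivWithinAt_const _ _ _).prodMk (hasDerivWithinAt_id _ _)
    have hmv : Set.MapsTo (fun s => ((x', s) : ℝ × ℝ)) (Set.Icc (0:ℝ) T) S :=
      fun s hs => ⟨Set.mem_univ _, hs⟩
    have h1 := ((hdiff (x', t) ⟨Set.mem_univ _, ht⟩).hasFDerivWithinAt).comp_hasDerivWithinAt
      t hcv hmv
    have h1' : HasDerivWithinAt (fun s => η x' s)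
        ((fderivWithin ℝ (fun p : ℝ × ℝ => η p.1 p.2) S (x', t)) (0, 1))
        (Set.Icc (0:ℝ) T) t := h1
    exact (h1'.derivWithin ((uniqueDiffOn_Icc hT) t ht)).symm.trans
      ((hη x' t ht).derivWithin ((uniqueDiffOn_Icc hT) t ht))
  have hfx : ∀ (x' : ℝ), ∀ t ∈ Set.Icc (0:ℝ) T,
      HasDerivAt (fun x'' => η x'' t)
        ((fderivWithin ℝ (fun p : ℝ × ℝ => η p.1 p.2) S (x', t)) (1, 0)) x' := by
    intro x' t ht
    have hcv : HasDerivWithinAt (fun u => ((u, t) : ℝ × ℝ)) (((1:ℝ), (0:ℝ))) Set.univ x' :=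
      (hasDerivWithinAt_id _ _).prodMk (hasDerivWithinAt_const _ _ _)
    have hmv : Set.MapsTo (fun u => ((u, t) : ℝ × ℝ)) Set.univ S :=
      fun u _ => ⟨Set.mem_univ _, ht⟩
    have h1 := ((hdiff (x', t) ⟨Set.mem_univ _, ht⟩).hasFDerivWithinAt).comp_hasDerivWithinAt
      x' hcv hmv
    rw [hasDerivWithinAt_univ] at h1
    exact h1
  set G : ℝ → ℝ :=
    fun t => (fderivWithin ℝ (fun p : ℝ × ℝ => η p.1 p.2) S (x, t)) (1, 0) with hGdef
  set ct : ℝ → ℝ :=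
    fun t => ((1 + α) * e.wy (η x t) t + (1 - α) * e.zy (η x t) t) / 2 with hctdef
  have hf'd : DifferentiableOn ℝ (fderivWithin ℝ (fun p : ℝ × ℝ => η p.1 p.2) S) S :=
    (hreg.fderivWithin (m := 1) hUD (by norm_num)).differentiableOn one_ne_zero
  have hGd : ∀ t ∈ Set.Icc (0:ℝ) T,
      HasDerivWithinAt G (ct t * G t) (Set.Icc (0:ℝ) T) t := by
    intro t ht
    have pS : ((x, t) : ℝ × ℝ) ∈ S := ⟨Set.mem_univ _, ht⟩
    -- derivative of t ↦ F'(x,t) and evaluation at (1,0)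
    have hcv : HasDerivWithinAt (fun s => ((x, s) : ℝ × ℝ)) (((0:ℝ), (1:ℝ)))
        (Set.Icc (0:ℝ) T) t :=
      (hasDerivWithinAt_const _ _ _).prodMk (hasDerivWithinAt_id _ _)
    have hmv : Set.MapsTo (fun s => ((x, s) : ℝ × ℝ)) (Set.Icc (0:ℝ) T) S :=
      fun s hs => ⟨Set.mem_univ _, hs⟩
    have h1 := ((hf'd (x, t) pS).hasFDerivWithinAt).comp_hasDerivWithinAt t hcv hmv
    have h2 := h1.clm_apply (hasDerivWithinAt_const t (Set.Icc (0:ℝ) T) (((1:ℝ), (0:ℝ))))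
    have h2' : HasDerivWithinAt G
        ((fderivWithin ℝ (fderivWithin ℝ (fun p : ℝ × ℝ => η p.1 p.2) S) S (x, t))
          (0, 1) (1, 0)) (Set.Icc (0:ℝ) T) t := by
      simpa [Function.comp] using h2
    -- symmetry of the second derivative
    have hint : closure (interior S) = S := by
      rw [hSdef, interior_prod_eq, interior_univ, interior_Icc, closure_prod_eq,
        closure_univ, closure_Ioo hT.ne]
    have hsym := (hreg (x, t) pS).isSymmSndFDerivWithinAt (by simp) hUD
      (by rw [hint]; exact pS) pS
    rw [hsym (0,1) (1,0)] at h2'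
    -- identify the other mixed derivative via the PDE
    have hcv2 : HasDerivWithinAt (fun u => ((u, t) : ℝ × ℝ)) (((1:ℝ), (0:ℝ))) Set.univ x :=
      (hasDerivWithinAt_id _ _).prodMk (hasDerivWithinAt_const _ _ _)
    have hmv2 : Set.MapsTo (fun u => ((u, t) : ℝ × ℝ)) Set.univ S :=
      fun u _ => ⟨Set.mem_univ _, ht⟩
    have h3 := ((hf'd (x, t) pS).hasFDerivWithinAt).comp_hasDerivWithinAt x hcv2 hmv2
    rw [hasDerivWithinAt_univ] at h3
    have h4 := h3.clm_apply (hasDerivAt_const x (((0:ℝ), (1:ℝ))))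
    have h4' : HasDerivAt (fun x' => e.lam3 (η x' t) t)
        ((fderivWithin ℝ (fderivWithin ℝ (fun p : ℝ × ℝ => η p.1 p.2) S) S (x, t))
          (1, 0) (0, 1)) x := by
      have hfun : (fun x' => (fderivWithin ℝ (fun p : ℝ × ℝ => η p.1 p.2) S (x', t))
          ((0:ℝ), (1:ℝ))) = fun x' => e.lam3 (η x' t) t :=
        funext fun x' => hft x' t ht
      rw [← hfun]
      simpa [Function.comp] using h4
    -- direct computation of the same derivative
    have hx' : HasDerivAt (fun x'' => η x'' t) (G t) x := hfx x t ht
    have hwd : HasDerivAt (fun x' => e.w (η x' t) t) (e.wy (η x t) t * G t) x := by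
      simpa [Function.comp_def] using (e.hwy (η x t) t ht).comp x hx'
    have hzd : HasDerivAt (fun x' => e.z (η x' t) t) (e.zy (η x t) t * G t) x := by
      simpa [Function.comp_def] using (e.hzy (η x t) t ht).comp x hx'
    have h5 : HasDerivAt (fun x' => e.lam3 (η x' t) t) (ct t * G t) x := by
      have h := ((hwd.add hzd).div_const 2).add
        (((hwd.sub hzd).div_const 2).const_mul α)
      have hfun2 : (fun x' => e.lam3 (η x' t) t) = fun x' =>
          (e.w (η x' t) t + e.z (η x' t) t) / 2 +
          α * ((e.w (η x' t) t - e.z (η x' t) t) / 2) := rfl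
      rw [hfun2]
      have hv : ct t * G t = (e.wy (η x t) t * G t + e.zy (η x t) t * G t) / 2 +
          α * ((e.wy (η x t) t * G t - e.zy (η x t) t * G t) / 2) := by
        simp only [hctdef]
        ring
      rw [hv]
      exact h
    have huniq := h4'.unique h5
    rw [huniq] at h2'
    exact h2'
  have hGc : ContinuousOn G (Set.Icc (0:ℝ) T) := fun t ht => (hGd t ht).continuousWithinAt
  have hctc : ContinuousOn ct (Set.Icc (0:ℝ) T) := by
    have hwc : ContinuousOn (fun t => e.wy (η x t) t) (Set.Icc (0:ℝ) T) :=
      e.cont_wy.comp hcurvec hmapsc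
    have hzc : ContinuousOn (fun t => e.zy (η x t) t) (Set.Icc (0:ℝ) T) :=
      e.cont_zy.comp hcurvec hmapsc
    exact ((continuousOn_const.mul hwc).add (continuousOn_const.mul hzc)).div_const 2
  have hmax1 : (0:ℝ) ≤ max 1 α := le_trans zero_le_one (le_max_left 1 α)
  have hN0 : (0:ℝ) ≤ max 1 α * M := mul_nonneg hmax1 hM
  have hctb : ∀ t ∈ Set.Icc (0:ℝ) T, |ct t| ≤ max 1 α * (A t + B t) := by
    intro t ht
    have h1 := hA t ht (η x t)
    have h2 := hB t ht (η x t)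
    have hA0' := hA0 t ht
    have hB0' := hB0 t ht
    have habs : |(1 + α) * e.wy (η x t) t + (1 - α) * e.zy (η x t) t|
        ≤ (1 + α) * A t + |1 - α| * B t := by
      refine (abs_add_le _ _).trans (add_le_add ?_ ?_)
      · rw [abs_mul, abs_of_pos (by linarith : (0:ℝ) < 1 + α)]
        exact mul_le_mul_of_nonneg_left h1 (by linarith)
      · rw [abs_mul]
        exact mul_le_mul_of_nonneg_left h2 (abs_nonneg _)
    have hct2 : |ct t| = |(1 + α) * e.wy (η x t) t + (1 - α) * e.zy (η x t) t| / 2 := by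
      simp only [hctdef]
      rw [abs_div, abs_two]
    rcases le_total α 1 with hc | hc
    · rw [max_eq_left hc, hct2]
      rw [abs_of_nonneg (by linarith : (0:ℝ) ≤ 1 - α)] at habs
      nlinarith
    · rw [max_eq_right hc, hct2]
      rw [abs_of_nonpos (by linarith : (1:ℝ) - α ≤ 0)] at habs
      nlinarith
  have hB₂i : IntervalIntegrable (fun t => max 1 α * (A t + B t)) volume 0 T :=
    hAB.const_mul _
  have hB₂M : (∫ t in (0:ℝ)..T, max 1 α * (A t + B t)) ≤ max 1 α * M := by
    rw [intervalIntegral.integral_const_mul]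
    exact mul_le_mul_of_nonneg_left hInt hmax1
  have hmono : ∀ u ∈ Set.Icc (0:ℝ) T,
      (∫ t in (0:ℝ)..u, max 1 α * (A t + B t)) ≤ max 1 α * M := by
    intro u hu
    refine le_trans ?_ hB₂M
    apply intervalIntegral.integral_mono_interval le_rfl hu.1 hu.2 _ hB₂i
    filter_upwards [ae_restrict_mem measurableSet_Ioc] with s hs
    have hsI : s ∈ Set.Icc (0:ℝ) T := Set.Ioc_subset_Icc_self hs
    exact mul_nonneg hmax1 (add_nonneg (hA0 s hsI) (hB0 s hsI))
  have hG0 : G 0 = 1 := by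
    have h1 : HasDerivAt (fun x'' => η x'' 0) (G 0) x := hfx x 0 h0m
    have h2 : (fun x'' => η x'' 0) = fun x'' => x'' := funext hη0
    rw [h2] at h1
    exact h1.unique (hasDerivAt_id x)
  have hGpos : ∀ t ∈ Set.Icc (0:ℝ) T, 0 < G t := by
    by_contra hcon
    push_neg at hcon
    obtain ⟨t₁, ht₁, ht₁le⟩ := hcon
    set Z : Set ℝ := Set.Icc (0:ℝ) T ∩ G ⁻¹' (Set.Iic 0) with hZdef
    have hZc : IsClosed Z :=
      hGc.preimage_isClosed_of_isClosed isClosed_Icc isClosed_Iic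
    have hZne : Z.Nonempty := ⟨t₁, ht₁, ht₁le⟩
    have hZbdd : BddBelow Z := ⟨0, fun t htz => htz.1.1⟩
    set t₀ := sInf Z with ht₀def
    have ht₀Z : t₀ ∈ Z := hZc.csInf_mem hZne hZbdd
    have ht₀I : t₀ ∈ Set.Icc (0:ℝ) T := ht₀Z.1
    have hGt₀ : G t₀ ≤ 0 := ht₀Z.2
    have ht₀pos : 0 < t₀ := by
      rcases eq_or_lt_of_le ht₀I.1 with h | h
      · exfalso
        rw [← h, hG0] at hGt₀
        linarith
      · exact h
    have hlt : ∀ u ∈ Set.Ico (0:ℝ) t₀, 0 < G u := by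
      intro u hu
      by_contra h
      push_neg at h
      have : u ∈ Z := ⟨⟨hu.1, hu.2.le.trans ht₀I.2⟩, h⟩
      exact absurd (csInf_le hZbdd this) (not_le.2 hu.2)
    have hlow : ∀ u ∈ Set.Ico (0:ℝ) t₀, Real.exp (-(max 1 α * M)) ≤ G u := by
      intro u hu
      have huT : u ∈ Set.Icc (0:ℝ) T := ⟨hu.1, hu.2.le.trans ht₀I.2⟩
      have huI : Set.Icc (0:ℝ) u ⊆ Set.Icc (0:ℝ) T := Set.Icc_subset_Icc le_rfl huT.2
      have hres := log_gronwall hu.1 hN0 G ct (fun t => max 1 α * (A t + B t))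
        (fun s hs => (hGd s (huI hs)).mono huI)
        (fun s hs => hlt s ⟨hs.1, lt_of_le_of_lt hs.2 hu.2⟩)
        (hctc.mono huI)
        (fun s hs => hctb s (huI hs))
        (hB₂i.mono_set (by rw [Set.uIcc_of_le hu.1, Set.uIcc_of_le hTle]; exact huI))
        (hmono u huT)
      have := (hres u ⟨hu.1, le_rfl⟩).1
      rwa [hG0, div_one] at this
    have hne : (nhdsWithin t₀ (Set.Ico 0 t₀)).NeBot := by
      rw [← mem_closure_iff_nhdsWithin_neBot, closure_Ico ht₀pos.ne]
      exact ⟨ht₀pos.le, le_rfl⟩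
    have htend : Filter.Tendsto G (nhdsWithin t₀ (Set.Ico 0 t₀)) (nhds (G t₀)) :=
      Filter.Tendsto.mono_left (hGc t₀ ht₀I)
        (nhdsWithin_mono _ (fun u hu => ⟨hu.1, hu.2.le.trans ht₀I.2⟩))
    have hge : Real.exp (-(max 1 α * M)) ≤ G t₀ :=
      ge_of_tendsto htend
        (Filter.eventually_of_mem self_mem_nhdsWithin (fun u hu => hlow u hu))
    linarith [Real.exp_pos (-(max 1 α * M))]
  have part2 := log_gronwall hTle hN0 G ct (fun t => max 1 α * (A t + B t))
    hGd hGpos hctc hctb hB₂i hB₂M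
  intro t ht
  obtain ⟨hp1, hp2⟩ := part1 t ht
  obtain ⟨hq1, hq2⟩ := part2 t ht
  rw [hG0, div_one] at hq1 hq2
  have hderiv : deriv (fun x' => η x' t) x = G t := (hfx x t ht).deriv
  exact ⟨hp1, hp2, by rw [hderiv]; exact hq1, by rw [hderiv]; exact hq2⟩
end
end
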